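/- arXiv:2201.04506 — 10 statements merged into one kernel-verified Lean document; each statement's English description precedes it below -/
import Mathlib

section
/- If U is an r-reduced binary information system (every consistent system of equations over U has a subsystem with the same solution set containing at most r equations), then U is (r+1)-i-reduced (every inconsistent system of equations over U has an inconsistent subsystem containing at most r+1 equations). -/
/-- An equation system over a binary information system with element set `A`
is a set of pairs `(g, δ)` encoding equations `g(x) = δ`. It is consistent
if it has a solution in `A`. -/
def Consistent {A : Type} (S : Set ((A → Bool) × Bool)) : Prop :=
  ∃ a : A, ∀ e ∈ S, e.1 a = e.2

/-- The system `S` uses only attributes from `F`. -/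
def OverF {A : Type} (F : Set (A → Bool)) (S : Set ((A → Bool) × Bool)) : Prop :=
  ∀ e ∈ S, e.1 ∈ F

/-- Solution set of an equation system. -/
def Sol {A : Type} (S : Set ((A → Bool) × Bool)) : Set A :=
  {a | ∀ e ∈ S, e.1 a = e.2}

/-- `U = (A, F)` is `r`-i-reduced: every inconsistent (finite) equation system over `U`
has an inconsistent subsystem with at most `r` equations. -/
def IReduced {A : Type} (F : Set (A → Bool)) (r : ℕ) : Prop :=
  ∀ S : Set ((A → Bool) × Bool), OverF F S → S.Finite → ¬ Consistent S →
    ∃ T ⊆ S, ¬ Consistent T ∧ T.ncard ≤ r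

/-- `U = (A, F)` is `r`-reduced: every consistent (finite) equation system over `U`
has a subsystem with the same solution set and at most `r` equations. -/
def RReduced {A : Type} (F : Set (A → Bool)) (r : ℕ) : Prop :=
  ∀ S : Set ((A → Bool) × Bool), OverF F S → S.Finite → Consistent S →
    ∃ T ⊆ S, Sol T = Sol S ∧ T.ncard ≤ r

/-- if `U` is `r`-reduced then `U` is `(r+1)`-i-reduced. -/
theorem stmt0 {A : Type} (F : Set (A → Bool)) (r : ℕ) (h : RReduced F r) :
    IReduced F (r + 1) := by
  classical
  intro S hOver hfin hinc
  by_cases hA : Nonempty A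
  case neg =>
    refine ⟨∅, by simp, ?_, by simp⟩
    rintro ⟨a, -⟩
    exact hA ⟨a⟩
  case pos =>
    obtain ⟨a0⟩ := hA
    set S₀ : Finset ((A → Bool) × Bool) := hfin.toFinset with hS₀
    have hS₀S : (↑S₀ : Set _) = S := hfin.coe_toFinset
    -- the collection of consistent subsets of S₀
    set C : Finset (Finset ((A → Bool) × Bool)) :=
      S₀.powerset.filter (fun t => Consistent (↑t : Set ((A → Bool) × Bool))) with hC
    have hCne : C.Nonempty := by
      refine ⟨∅, ?_⟩
      simp [hC, Consistent]
      exact ⟨a0⟩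
    obtain ⟨t, htC, htmax⟩ := C.exists_max_image Finset.card hCne
    have htsub : t ⊆ S₀ := Finset.mem_powerset.mp (Finset.mem_filter.mp htC).1
    have htcons : Consistent (↑t : Set ((A → Bool) × Bool)) := (Finset.mem_filter.mp htC).2
    -- t ≠ S₀
    have hne : t ≠ S₀ := by
      intro he
      apply hinc
      rw [← hS₀S, ← he]
      exact htcons
    obtain ⟨e, heS₀, het⟩ : ∃ e ∈ S₀, e ∉ t := by
      by_contra hcon
      push_neg at hcon
      exact hne (Finset.Subset.antisymm htsub hcon)
    -- insert e t is inconsistent by maximality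
    have hins : ¬ Consistent (↑(insert e t) : Set ((A → Bool) × Bool)) := by
      intro hcons
      have hmem : insert e t ∈ C := by
        rw [hC, Finset.mem_filter, Finset.mem_powerset]
        exact ⟨Finset.insert_subset heS₀ htsub, hcons⟩
      have := htmax _ hmem
      rw [Finset.card_insert_of_notMem het] at this
      omega
    -- apply RReduced to t
    have htset : (↑t : Set _) ⊆ S := by rw [← hS₀S]; exact_mod_cast htsub
    obtain ⟨T, hTsub, hTsol, hTcard⟩ :=
      h (↑t : Set _) (fun x hx => hOver x (htset hx)) t.finite_toSet htcons
    refine ⟨insert e T, ?_, ?_, ?_⟩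
    · exact Set.insert_subset (hS₀S ▸ heS₀) (hTsub.trans htset)
    · rintro ⟨a, ha⟩
      apply hins
      refine ⟨a, ?_⟩
      intro x hx
      rw [Finset.coe_insert] at hx
      rcases hx with rfl | hx
      · exact ha x (Set.mem_insert _ _)
      · have : a ∈ Sol (↑t : Set _) := by
          rw [← hTsol]
          intro y hy
          exact ha y (Set.mem_insert_of_mem _ hy)
        exact this x hx
    · calc (insert e T).ncard ≤ T.ncard + 1 :=
            Set.ncard_insert_le e T
        _ ≤ r + 1 := by omega
end

section
/- Let U=(A,F) be a binary information system, z a problem over U of dimension n, and Γ₁ a decision tree over z that solves z relative to U using both attributes from F(z) and proper hypotheses over z. Then there exists a decision tree Γ₂ over z that solves z relative to U, uses only proper hypotheses over z, and has depth at most 2^{h(Γ₁)} − 1, where h(Γ₁) is the depth of Γ₁. -/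
/-- Decision trees over a problem `z = (f₀, …, f_{n-1})` of dimension `n`:
a node is a terminal node labeled with an answer tuple, an attribute query
(with two children, for the answers `fᵢ(x) = false` and `fᵢ(x) = true`), or a
hypothesis query `{f₀(x) = δ₀, …, f_{n-1}(x) = δ_{n-1}}` (with a child for the
confirming answer and one child for each possible counterexample `fᵢ(x) = ¬δᵢ`). -/
inductive DT (n : ℕ) : Type where
  | leaf (ans : Fin n → Bool)
  | attr (i : Fin n) (c : Bool → DT n)
  | hyp (δ : Fin n → Bool) (conf : DT n) (ctr : Fin n → DT n)

namespace DT

/-- Depth of a decision tree: maximum number of queries on a complete path. -/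
def depth {n : ℕ} : DT n → ℕ
  | leaf _ => 0
  | attr _ c => 1 + max (depth (c false)) (depth (c true))
  | hyp _ conf ctr => 1 + max (depth conf) (Finset.univ.sup fun i => depth (ctr i))

/-- The tree solves the problem `z` for the element `a`: along every complete path
compatible with `a` (attribute queries are answered truthfully; a true hypothesis
is confirmed, and a false hypothesis may be answered by any valid counterexample),
the terminal label equals `z(a)`. -/
def Solves {A : Type} {n : ℕ} (z : Fin n → A → Bool) (a : A) : DT n → Prop
  | leaf ans => ∀ i, ans i = z i a
  | attr i c => Solves z a (c (z i a))
  | hyp δ conf ctr =>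
      ((∀ i, z i a = δ i) → Solves z a conf) ∧
      (∀ i, z i a ≠ δ i → Solves z a (ctr i))

/-- The tree uses no attribute queries (only hypotheses). -/
def NoAttr {n : ℕ} : DT n → Prop
  | leaf _ => True
  | attr _ _ => False
  | hyp _ conf ctr => NoAttr conf ∧ ∀ i, NoAttr (ctr i)

/-- All hypotheses used in the tree are proper for `U`, i.e. the corresponding
equation system `{f₀(x) = δ₀, …}` is consistent on `A`. -/
def ProperHyps {A : Type} {n : ℕ} (z : Fin n → A → Bool) : DT n → Prop
  | leaf _ => True
  | attr _ c => ∀ b, ProperHyps z (c b)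
  | hyp δ conf ctr =>
      (∃ a : A, ∀ i, z i a = δ i) ∧ ProperHyps z conf ∧ ∀ i, ProperHyps z (ctr i)

end DT

/-! Induction on `Γ₁`, keeping track of the set `S` of inputs for which the current subtree has
to be correct. Hypothesis nodes are kept. An attribute query `fᵢ` is eliminated as follows: take
hypothesis-only trees `T₀` and `T₁` for the inputs of `S` with `fᵢ = 0` and `fᵢ = 1`, run `T₀`
and at each of its leaves `δ` ask the hypothesis `z(x) = δ`. A confirmation certifies `δ`; a
counterexample (or an improper `δ`) passes control to `T₁`. The depth becomes at most
`(2^m - 1) + 1 + (2^m - 1) = 2^(m+1) - 1`. -/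

lemma two_pow_sub_one_le_two_pow_sub_one {a b : ℕ} (h : a ≤ b) : 2 ^ a - 1 ≤ 2 ^ b - 1 :=
  Nat.sub_le_sub_right (Nat.pow_le_pow_right two_pos h) 1

lemma two_pow_sub_one_add_two_pow_sub_one_le (a b : ℕ) :
    2 ^ a - 1 + 1 + (2 ^ b - 1) ≤ 2 ^ (1 + max a b) - 1 := by
  have ha : 2 ^ a ≤ 2 ^ max a b := Nat.pow_le_pow_right two_pos (le_max_left a b)
  have hb : 2 ^ b ≤ 2 ^ max a b := Nat.pow_le_pow_right two_pos (le_max_right a b)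
  have h1 : 1 ≤ 2 ^ a := Nat.one_le_two_pow
  have h2 : 1 ≤ 2 ^ b := Nat.one_le_two_pow
  rw [pow_add, pow_one]
  omega

namespace DT

section depth

variable {n : ℕ} {δ : Fin n → Bool} {conf : DT n} {ctr : Fin n → DT n}

lemma depth_hyp_le {k : ℕ} (hconf : depth conf ≤ k) (hctr : ∀ i, depth (ctr i) ≤ k) :
    depth (hyp δ conf ctr) ≤ 1 + k :=
  Nat.add_le_add_left (max_le hconf (Finset.sup_le fun i _ => hctr i)) 1

lemma depth_ctr_le (i : Fin n) : depth (ctr i) ≤ depth (hyp δ conf ctr) - 1 := by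
  have : depth (ctr i) ≤ Finset.univ.sup fun i => depth (ctr i) :=
    Finset.le_sup (f := fun i => depth (ctr i)) (Finset.mem_univ i)
  simp only [depth]
  omega

lemma depth_conf_le : depth conf ≤ depth (hyp δ conf ctr) - 1 := by
  simp only [depth]
  omega

end depth

open Classical in
noncomputable def graft {A : Type} {n : ℕ} (z : Fin n → A → Bool) (T₁ : DT n) : DT n → DT n
  | leaf δ => if ∃ a : A, ∀ j, z j a = δ j then hyp δ (leaf δ) (fun _ => T₁) else T₁
  | attr i c => attr i fun b => graft z T₁ (c b)
  | hyp δ conf ctr => hyp δ (graft z T₁ conf) fun i => graft z T₁ (ctr i)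

section graft

variable {A : Type} {n : ℕ} {z : Fin n → A → Bool} {T₁ : DT n} {a : A}

lemma solves_graft_of_solves : ∀ {T : DT n}, Solves z a T → Solves z a (graft z T₁ T)
  | leaf δ, h => by
      rw [graft, if_pos ⟨a, fun j => (h j).symm⟩]
      exact ⟨fun _ => h, fun j hj => absurd (h j).symm hj⟩
  | attr i c, h => solves_graft_of_solves (T := c (z i a)) h
  | hyp δ conf ctr, h =>
      ⟨fun hc => solves_graft_of_solves (h.1 hc), fun j hj => solves_graft_of_solves (h.2 j hj)⟩

lemma solves_graft_of_solves_fallback (h₁ : Solves z a T₁) :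
    ∀ T : DT n, Solves z a (graft z T₁ T)
  | leaf δ => by
      rw [graft]
      split
      · exact ⟨fun h j => (h j).symm, fun _ _ => h₁⟩
      · exact h₁
  | attr i c => solves_graft_of_solves_fallback h₁ (c (z i a))
  | hyp δ conf ctr =>
      ⟨fun _ => solves_graft_of_solves_fallback h₁ conf,
        fun j _ => solves_graft_of_solves_fallback h₁ (ctr j)⟩

lemma noAttr_graft (h₁ : NoAttr T₁) : ∀ {T : DT n}, NoAttr T → NoAttr (graft z T₁ T)
  | leaf δ, _ => by
      rw [graft]
      split
      · exact ⟨trivial, fun _ => h₁⟩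
      · exact h₁
  | hyp δ conf ctr, h => ⟨noAttr_graft h₁ h.1, fun j => noAttr_graft h₁ (h.2 j)⟩

lemma properHyps_graft (h₁ : ProperHyps z T₁) :
    ∀ {T : DT n}, ProperHyps z T → ProperHyps z (graft z T₁ T)
  | leaf δ, _ => by
      rw [graft]
      split
      · next hδ => exact ⟨hδ, trivial, fun _ => h₁⟩
      · exact h₁
  | attr i c, h => fun b => properHyps_graft h₁ (h b)
  | hyp δ conf ctr, h => ⟨h.1, properHyps_graft h₁ h.2.1, fun j => properHyps_graft h₁ (h.2.2 j)⟩

lemma depth_graft_le : ∀ T : DT n, depth (graft z T₁ T) ≤ depth T + 1 + depth T₁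
  | leaf δ => by
      rw [graft]
      split <;> simp [depth]
  | attr i c => by
      have hf := depth_graft_le (c false)
      have ht := depth_graft_le (c true)
      simp only [graft, depth]
      omega
  | hyp δ conf ctr => by
      refine (depth_hyp_le (k := depth (hyp δ conf ctr) - 1 + 1 + depth T₁) ?_ fun i => ?_).trans ?_
      · have := depth_conf_le (δ := δ) (conf := conf) (ctr := ctr)
        exact (depth_graft_le conf).trans (by omega)
      · have := depth_ctr_le (δ := δ) (conf := conf) (ctr := ctr) i
        exact (depth_graft_le (ctr i)).trans (by omega)
      · simp only [depth]
        omega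

end graft

theorem exists_noAttr_properHyps_depth_le {A : Type} {n : ℕ} (z : Fin n → A → Bool) :
    ∀ (Γ : DT n) (S : Set A), (∀ a ∈ S, Solves z a Γ) → ProperHyps z Γ →
      ∃ Γ' : DT n, (∀ a ∈ S, Solves z a Γ') ∧ NoAttr Γ' ∧ ProperHyps z Γ' ∧
        depth Γ' ≤ 2 ^ depth Γ - 1
  | leaf δ, _, hs, _ => ⟨leaf δ, hs, trivial, trivial, by simp [depth]⟩
  | attr i c, S, hs, hp => by
      obtain ⟨T₀, hs₀, hna₀, hp₀, hd₀⟩ :=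
        exists_noAttr_properHyps_depth_le z (c false) {a ∈ S | z i a = false}
          (fun a ⟨ha, hi⟩ => by simpa [Solves, hi] using hs a ha) (hp false)
      obtain ⟨T₁, hs₁, hna₁, hp₁, hd₁⟩ :=
        exists_noAttr_properHyps_depth_le z (c true) {a ∈ S | z i a = true}
          (fun a ⟨ha, hi⟩ => by simpa [Solves, hi] using hs a ha) (hp true)
      refine ⟨graft z T₁ T₀, fun a ha => ?_, noAttr_graft hna₁ hna₀, properHyps_graft hp₁ hp₀, ?_⟩
      · cases hi : z i a with
        | false => exact solves_graft_of_solves (hs₀ a ⟨ha, hi⟩)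
        | true => exact solves_graft_of_solves_fallback (hs₁ a ⟨ha, hi⟩) T₀
      · have := two_pow_sub_one_add_two_pow_sub_one_le (depth (c false)) (depth (c true))
        have := depth_graft_le (z := z) (T₁ := T₁) T₀
        simp only [depth]
        omega
  | hyp δ conf ctr, S, hs, hp => by
      obtain ⟨Tc, hsc, hnac, hpc, hdc⟩ :=
        exists_noAttr_properHyps_depth_le z conf {a ∈ S | ∀ j, z j a = δ j}
          (fun a ⟨ha, hδ⟩ => (hs a ha).1 hδ) hp.2.1
      choose Tk hsk hnak hpk hdk using fun i =>
        exists_noAttr_properHyps_depth_le z (ctr i) {a ∈ S | z i a ≠ δ i}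
          (fun a ⟨ha, hi⟩ => (hs a ha).2 i hi) (hp.2.2 i)
      refine ⟨hyp δ Tc Tk, fun a ha => ⟨fun hδ => hsc a ⟨ha, hδ⟩, fun j hj => hsk j a ⟨ha, hj⟩⟩,
        ⟨hnac, hnak⟩, ⟨hp.1, hpc, hpk⟩, ?_⟩
      set m := depth (hyp δ conf ctr) - 1
      have hm : depth (hyp δ conf ctr) = 1 + m := by simp only [m, depth]; omega
      refine (depth_hyp_le (k := 2 ^ m - 1) ?_ fun i => ?_).trans ?_
      · exact hdc.trans (two_pow_sub_one_le_two_pow_sub_one depth_conf_le)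
      · exact (hdk i).trans (two_pow_sub_one_le_two_pow_sub_one (depth_ctr_le i))
      · have : 1 ≤ 2 ^ m := Nat.one_le_two_pow
        rw [hm, pow_add, pow_one]
        omega

end DT

theorem stmt1_general {A : Type} {n : ℕ} (z : Fin n → A → Bool)
    (Γ₁ : DT n) (hsolve : ∀ a : A, DT.Solves z a Γ₁)
    (hproper : DT.ProperHyps z Γ₁) :
    ∃ Γ₂ : DT n, (∀ a : A, DT.Solves z a Γ₂) ∧ DT.NoAttr Γ₂ ∧ DT.ProperHyps z Γ₂ ∧
      Γ₂.depth ≤ 2 ^ Γ₁.depth - 1 := by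
  obtain ⟨Γ₂, hs, hna, hp, hd⟩ :=
    DT.exists_noAttr_properHyps_depth_le z Γ₁ Set.univ (fun a _ => hsolve a) hproper
  exact ⟨Γ₂, fun a => hs a trivial, hna, hp, hd⟩

/-- from a tree using attributes and proper hypotheses one obtains a tree
using only proper hypotheses of depth at most `2^{h(Γ₁)} - 1`. -/
theorem stmt1 {A : Type} (F : Set (A → Bool)) {n : ℕ} (z : Fin n → A → Bool)
    (hz : ∀ i, z i ∈ F) (Γ₁ : DT n) (hsolve : ∀ a : A, DT.Solves z a Γ₁)
    (hproper : DT.ProperHyps z Γ₁) :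
    ∃ Γ₂ : DT n, (∀ a : A, DT.Solves z a Γ₂) ∧ DT.NoAttr Γ₂ ∧ DT.ProperHyps z Γ₂ ∧
      Γ₂.depth ≤ 2 ^ Γ₁.depth - 1 :=
  stmt1_general z Γ₁ hsolve hproper
end

section
/- Let U=(A,F) be a binary information system that is both r-i-reduced and a k-information system. Then for every problem z over U, the minimum depth of a decision tree over z that solves z relative to U using both attributes and proper hypotheses is at most rk. -/
/-- `InfoLe F k B` holds iff `(B, F)` is an `m`-information system for some `m ≤ k`:
`(B, F)` is a 0-information system iff all attributes of `F` are constant on `B`, and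
`(B, F)` is a `(k+1)`-information system iff it is not an `m`-information system for any
`m ≤ k` and for every `f ∈ F` there exist `δ` and `m ≤ k` such that `(B(f,δ), F)` is an
`m`-information system. -/
def InfoLe {A : Type} (F : Set (A → Bool)) : ℕ → Set A → Prop
  | 0, B => ∀ f ∈ F, ∀ a ∈ B, ∀ b ∈ B, f a = f b
  | k + 1, B => InfoLe F k B ∨ ∀ f ∈ F, ∃ δ : Bool, InfoLe F k {a | a ∈ B ∧ f a = δ}

/-- `U = (A, F)` is (exactly) a `k`-information system. -/
def ExactInfo {A : Type} (F : Set (A → Bool)) (k : ℕ) : Prop :=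
  InfoLe F k Set.univ ∧ ∀ m, m < k → ¬ InfoLe F m Set.univ

/-!
Induction on `k`, for an arbitrary set `B` of elements in place of `A`. If every attribute is
constant on `B`, a single leaf solves `z`. Otherwise, for each `zᵢ` choose `δᵢ` such that
`B(zᵢ, δᵢ)` has smaller information level, and solve `z` there by the induction hypothesis with a
tree `Γᵢ`. If the system `{zᵢ(x) = ¬δᵢ}` is consistent, ask it as a hypothesis: it is either
confirmed, or a counterexample `zᵢ(x) = δᵢ` leads to `Γᵢ`. If it is inconsistent, `r`-i-reducedness
gives at most `r` indices `i` one of which satisfies `zᵢ(x) = δᵢ` for every `x`; asking these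
attributes one after another finds one and leads to `Γᵢ`. Either way the depth grows by at most `r`.
-/

section Cover

variable {A : Type} {F : Set (A → Bool)} {r : ℕ}

theorem IReduced.exists_finset_forall_exists_ne {ι : Type*} [Finite ι] (hI : IReduced F r)
    {z : ι → A → Bool} (hz : ∀ i, z i ∈ F) {η : ι → Bool} (hη : ¬ ∃ a, ∀ i, z i a = η i) :
    ∃ I : Finset ι, I.card ≤ r ∧ ∀ a, ∃ i ∈ I, z i a ≠ η i := by
  set p : ι → (A → Bool) × Bool := fun i => (z i, η i)
  have hS : ¬ Consistent (Set.range p) := fun ⟨a, ha⟩ => hη ⟨a, fun i => ha _ ⟨i, rfl⟩⟩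
  obtain ⟨T, hTS, hT, hTcard⟩ :=
    hI (Set.range p) (by rintro _ ⟨i, rfl⟩; exact hz i) (Set.finite_range p) hS
  obtain ⟨s, -, hs⟩ := Set.exists_subset_bijOn (p ⁻¹' T) p
  rw [Set.image_preimage_eq_of_subset hTS] at hs
  refine ⟨(Set.toFinite s).toFinset, ?_, fun a => ?_⟩
  · rw [← Set.ncard_eq_toFinset_card]
    exact (Set.ncard_le_ncard_of_injOn p hs.mapsTo hs.injOn ((Set.finite_range p).subset hTS)).trans
      hTcard
  · obtain ⟨e, he, hea⟩ : ∃ e ∈ T, e.1 a ≠ e.2 := by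
      by_contra! h
      exact hT ⟨a, h⟩
    obtain ⟨i, hi, rfl⟩ := hs.surjOn he
    exact ⟨i, (Set.toFinite s).mem_toFinset.mpr hi, hea⟩

/-- `{f(x) = true, f(x) = false}` is inconsistent, but its empty subsystem is not. -/
theorem IReduced.one_le [Nonempty A] (hI : IReduced F r) {f : A → Bool} (hf : f ∈ F) : 1 ≤ r := by
  obtain ⟨I, hIr, hcover⟩ := hI.exists_finset_forall_exists_ne (z := fun _ : Bool => f) (fun _ => hf)
    (η := id) fun ⟨a, ha⟩ => by simpa using (ha true).symm.trans (ha false)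
  obtain ⟨i, hi, -⟩ := hcover (Classical.arbitrary A)
  exact (Finset.one_le_card.mpr ⟨i, hi⟩).trans hIr

end Cover

namespace DT

variable {A : Type} {n : ℕ}

def attrChain (δ : Fin n → Bool) (Γ : Fin n → DT n) : List (Fin n) → DT n
  | [] => leaf δ
  | j :: L => attr j fun b => if b = δ j then Γ j else attrChain δ Γ L

variable {δ : Fin n → Bool} {Γ : Fin n → DT n} {z : Fin n → A → Bool}

theorem solves_attrChain {a : A} {L : List (Fin n)}
    (hΓ : ∀ j ∈ L, z j a = δ j → Solves z a (Γ j)) (hL : ∃ j ∈ L, z j a = δ j) :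
    Solves z a (attrChain δ Γ L) := by
  induction L with
  | nil => simp at hL
  | cons j L ih =>
    simp only [attrChain, Solves]
    split_ifs with hj
    · exact hΓ j List.mem_cons_self hj
    · refine ih (fun i hi => hΓ i (List.mem_cons_of_mem j hi)) ?_
      obtain ⟨i, hi, hia⟩ := hL
      obtain rfl | hi := List.mem_cons.mp hi
      · exact absurd hia hj
      · exact ⟨i, hi, hia⟩

theorem properHyps_attrChain (hΓ : ∀ j, ProperHyps z (Γ j)) (L : List (Fin n)) :
    ProperHyps z (attrChain δ Γ L) := by
  induction L with
  | nil => trivial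
  | cons j L ih =>
    intro b
    dsimp only
    split_ifs
    exacts [hΓ j, ih]

theorem depth_attrChain_le {d : ℕ} (hΓ : ∀ j, (Γ j).depth ≤ d) (L : List (Fin n)) :
    (attrChain δ Γ L).depth ≤ L.length + d := by
  induction L with
  | nil => exact Nat.zero_le _
  | cons j L ih =>
    have hbranch : ∀ b, (if b = δ j then Γ j else attrChain δ Γ L).depth ≤ L.length + d := by
      intro b
      split_ifs
      exacts [(hΓ j).trans (Nat.le_add_left _ _), ih]
    simp only [attrChain, depth, List.length_cons]
    have := hbranch false
    have := hbranch true
    omega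

theorem depth_hyp_leaf_le {η : Fin n → Bool} {d : ℕ} (hΓ : ∀ j, (Γ j).depth ≤ d) :
    (hyp η (leaf η) Γ).depth ≤ 1 + d := by
  have := Finset.sup_le (s := Finset.univ) (f := fun j => (Γ j).depth) fun j _ => hΓ j
  simp only [depth]
  omega

end DT

section Construction

variable {A : Type} {F : Set (A → Bool)} {r : ℕ} {n : ℕ} {z : Fin n → A → Bool}

theorem exists_tree_of_branches (hr : 1 ≤ r) (hI : IReduced F r) (hz : ∀ i, z i ∈ F)
    {B : Set A} {δ : Fin n → Bool} {Γ : Fin n → DT n} {d : ℕ}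
    (hsolves : ∀ i, ∀ a ∈ B, z i a = δ i → DT.Solves z a (Γ i))
    (hproper : ∀ i, DT.ProperHyps z (Γ i)) (hdepth : ∀ i, (Γ i).depth ≤ d) :
    ∃ Γ' : DT n, (∀ a ∈ B, DT.Solves z a Γ') ∧ DT.ProperHyps z Γ' ∧ Γ'.depth ≤ r + d := by
  set η : Fin n → Bool := fun i => !δ i
  by_cases hη : ∃ a, ∀ i, z i a = η i
  · refine ⟨.hyp η (.leaf η) Γ, fun a ha => ⟨fun h i => (h i).symm, fun i hi => ?_⟩,
      ⟨hη, trivial, hproper⟩, (DT.depth_hyp_leaf_le hdepth).trans (by omega)⟩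
    exact hsolves i a ha (Bool.ne_not.mp hi)
  · obtain ⟨I, hIr, hIcover⟩ := hI.exists_finset_forall_exists_ne hz hη
    refine ⟨DT.attrChain δ Γ I.toList, fun a ha => DT.solves_attrChain
      (fun i _ => hsolves i a ha) ?_, DT.properHyps_attrChain hproper _, ?_⟩
    · obtain ⟨i, hi, hia⟩ := hIcover a
      exact ⟨i, Finset.mem_toList.mpr hi, Bool.ne_not.mp hia⟩
    · have := DT.depth_attrChain_le (δ := δ) hdepth I.toList
      rw [Finset.length_toList] at this
      omega

theorem exists_tree_of_infoLe (hr : 1 ≤ r) (hI : IReduced F r) (hz : ∀ i, z i ∈ F) :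
    ∀ (k : ℕ) {B : Set A}, InfoLe F k B →
      ∃ Γ : DT n, (∀ a ∈ B, DT.Solves z a Γ) ∧ DT.ProperHyps z Γ ∧ Γ.depth ≤ r * k
  | 0, B, hB => by
    rcases B.eq_empty_or_nonempty with rfl | ⟨b, hb⟩
    · exact ⟨.leaf fun _ => false, by simp, trivial, Nat.zero_le _⟩
    · exact ⟨.leaf fun i => z i b, fun a ha i => hB (z i) (hz i) b hb a ha, trivial, Nat.zero_le _⟩
  | k + 1, B, Or.inl hB => by
    obtain ⟨Γ, hsolves, hproper, hdepth⟩ := exists_tree_of_infoLe hr hI hz k hB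
    exact ⟨Γ, hsolves, hproper, hdepth.trans (Nat.mul_le_mul_left r k.le_succ)⟩
  | k + 1, B, Or.inr hB => by
    choose δ hδ using fun i => hB (z i) (hz i)
    choose Γ hsolves hproper hdepth using fun i => exists_tree_of_infoLe hr hI hz k (hδ i)
    rw [Nat.mul_succ, add_comm]
    exact exists_tree_of_branches hr hI hz (fun i a ha hai => hsolves i a ⟨ha, hai⟩) hproper hdepth

end Construction

/-- if `U` is `r`-i-reduced and a `k`-information system, then every problem
over `U` is solved by a decision tree using attributes and proper hypotheses of depth
at most `r * k`. -/
theorem stmt4 {A : Type} (F : Set (A → Bool)) (r k : ℕ)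
    (hI : IReduced F r) (hK : ExactInfo F k)
    {n : ℕ} (z : Fin n → A → Bool) (hz : ∀ i, z i ∈ F) :
    ∃ Γ : DT n, (∀ a : A, DT.Solves z a Γ) ∧ DT.ProperHyps z Γ ∧
      Γ.depth ≤ r * k := by
  rcases isEmpty_or_nonempty A with _ | _
  · exact ⟨.leaf fun _ => false, fun a => isEmptyElim a, trivial, Nat.zero_le _⟩
  cases n with
  | zero => exact ⟨.leaf Fin.elim0, fun _ i => i.elim0, trivial, Nat.zero_le _⟩
  | succ n =>
    obtain ⟨Γ, hsolves, hproper, hdepth⟩ :=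
      exists_tree_of_infoLe (hI.one_le (hz 0)) hI hz k hK.1
    exact ⟨Γ, fun a => hsolves a trivial, hproper, hdepth⟩
end

section
/- Let U=(A,F) be an infinite binary information system not belonging to the class I, i.e., for every r∈ℕ there is an inconsistent equation system over U all of whose proper subsystems are consistent and which has more than r equations. Then for infinitely many n∈ℕ, there exists a problem z over U of dimension n such that every decision tree over z solving z relative to U using attributes and proper hypotheses has depth at least n−1. -/
/-!
Take a minimal inconsistent system `{f₀(x) = δ₀, …, f_{n-1}(x) = δ_{n-1}}` over `U` with `n > m`
equations and let `z = (f₀, …, f_{n-1})`. Dropping the `i`-th equation leaves a consistent system;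
a solution `wᵢ` of it agrees with `δ` everywhere except at coordinate `i`. An adversary answering
for the elements `w₀, …, w_{n-1}` loses at most one of them per query: an attribute query `fᵢ` is
answered `δᵢ`, which is true for every `wⱼ` with `j ≠ i`, and a proper hypothesis `δ'` differs from
the unsatisfiable `δ` at some `k`, so the counterexample `f_k(x) = δ_k` is valid for every `wⱼ`
with `j ≠ k`. Distinct `wⱼ` have distinct values of `z`, so a leaf serves at most one of them.
-/

section Adversary

variable {A : Type} {n : ℕ} {z : Fin n → A → Bool} {δ : Fin n → Bool} {w : Fin n → A}

theorem apply_witness_ne (hincons : ∀ a, ∃ i, z i a ≠ δ i)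
    (hw : ∀ i j, j ≠ i → z j (w i) = δ j) (i : Fin n) : z i (w i) ≠ δ i := by
  intro hi
  obtain ⟨j, hj⟩ := hincons (w i)
  by_cases hji : j = i
  · exact hj (hji ▸ hi)
  · exact hj (hw i j hji)

theorem card_le_one_of_solves_leaf (hincons : ∀ a, ∃ i, z i a ≠ δ i)
    (hw : ∀ i j, j ≠ i → z j (w i) = δ j) {ans : Fin n → Bool} {J : Finset (Fin n)}
    (hsol : ∀ j ∈ J, DT.Solves z (w j) (.leaf ans)) : J.card ≤ 1 := by
  refine Finset.card_le_one.mpr fun j hj k hk => ?_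
  by_contra hjk
  apply apply_witness_ne hincons hw j
  calc z j (w j) = ans j := (hsol j hj j).symm
    _ = z j (w k) := hsol k hk j
    _ = δ j := hw k j hjk

theorem card_sub_one_le_depth (hincons : ∀ a, ∃ i, z i a ≠ δ i)
    (hw : ∀ i j, j ≠ i → z j (w i) = δ j) (Γ : DT n) (hΓ : DT.ProperHyps z Γ)
    (J : Finset (Fin n)) (hsol : ∀ j ∈ J, DT.Solves z (w j) Γ) : J.card - 1 ≤ Γ.depth := by
  induction Γ generalizing J with
  | leaf ans =>
    have := card_le_one_of_solves_leaf hincons hw hsol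
    simp only [DT.depth]
    omega
  | attr i c ih =>
    have hsol' : ∀ j ∈ J.erase i, DT.Solves z (w j) (c (δ i)) := by
      intro j hj
      have := hsol j (Finset.mem_of_mem_erase hj)
      rwa [DT.Solves, hw j i (Finset.ne_of_mem_erase hj).symm] at this
    have hd := ih (δ i) (hΓ (δ i)) _ hsol'
    have hle : (c (δ i)).depth ≤ max (c false).depth (c true).depth := by
      cases δ i <;> simp
    have := Finset.pred_card_le_card_erase (s := J) (a := i)
    simp only [DT.depth]
    omega
  | hyp δ' conf ctr _ ih =>
    obtain ⟨⟨a, ha⟩, -, hΓctr⟩ := hΓ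
    obtain ⟨k, hk⟩ : ∃ k, δ' k ≠ δ k := by
      obtain ⟨k, hk⟩ := hincons a
      exact ⟨k, ha k ▸ hk⟩
    have hsol' : ∀ j ∈ J.erase k, DT.Solves z (w j) (ctr k) := by
      intro j hj
      refine (hsol j (Finset.mem_of_mem_erase hj)).2 k ?_
      rw [hw j k (Finset.ne_of_mem_erase hj).symm]
      exact hk.symm
    have hd := ih k (hΓctr k) _ hsol'
    have hle : (ctr k).depth ≤ Finset.univ.sup fun i => (ctr i).depth :=
      Finset.le_sup (f := fun i => (ctr i).depth) (Finset.mem_univ k)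
    have := Finset.pred_card_le_card_erase (s := J) (a := k)
    simp only [DT.depth]
    omega

end Adversary

theorem exists_witnesses_of_minimal_inconsistent {A : Type} {S : Set ((A → Bool) × Bool)}
    (hfin : S.Finite) (hincons : ¬ Consistent S) (hmin : ∀ T, T ⊂ S → Consistent T) :
    ∃ (z : Fin S.ncard → A → Bool) (δ : Fin S.ncard → Bool) (w : Fin S.ncard → A),
      (∀ i, (z i, δ i) ∈ S) ∧ (∀ a, ∃ i, z i a ≠ δ i) ∧ ∀ i j, j ≠ i → z j (w i) = δ j := by
  have := hfin.to_subtype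
  let e : Fin S.ncard ≃ S := (Finite.equivFinOfCardEq (Nat.card_coe_set_eq S)).symm
  have hwit : ∀ i, ∃ a, ∀ j, j ≠ i → (e j).1.1 a = (e j).1.2 := by
    intro i
    obtain ⟨a, ha⟩ := hmin _ (Set.sdiff_singleton_ssubset.mpr (e i).2)
    exact ⟨a, fun j hji => ha _ ⟨(e j).2, fun h => hji (e.injective (Subtype.ext h))⟩⟩
  choose w hw using hwit
  refine ⟨fun i => (e i).1.1, fun i => (e i).1.2, w, fun i => (e i).2, fun a => ?_, hw⟩
  by_contra! hall
  refine hincons ⟨a, fun s hs => ?_⟩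
  simpa using hall (e.symm ⟨s, hs⟩)

theorem stmt5_general {A : Type} (F : Set (A → Bool))
    (hnotI : ∀ r : ℕ, ∃ S : Set ((A → Bool) × Bool), OverF F S ∧ S.Finite ∧
      ¬ Consistent S ∧ (∀ T, T ⊂ S → Consistent T) ∧ r < S.ncard) :
    ∀ m : ℕ, ∃ n : ℕ, m ≤ n ∧ ∃ z : Fin n → A → Bool, (∀ i, z i ∈ F) ∧
      ∀ Γ : DT n, (∀ a : A, DT.Solves z a Γ) → DT.ProperHyps z Γ →
        n - 1 ≤ Γ.depth := by
  intro m
  obtain ⟨S, hF, hfin, hincons, hmin, hm⟩ := hnotI m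
  obtain ⟨z, δ, w, hzS, hzδ, hw⟩ := exists_witnesses_of_minimal_inconsistent hfin hincons hmin
  refine ⟨S.ncard, hm.le, z, fun i => hF _ (hzS i), fun Γ hsol hΓ => ?_⟩
  simpa using card_sub_one_le_depth hzδ hw Γ hΓ Finset.univ fun j _ => hsol (w j)

/-- if `U` is an infinite binary information system not in the class `I`
(for every `r` there is an inconsistent equation system over `U`, all of whose proper
subsystems are consistent, with more than `r` equations), then for infinitely many `n`
there is a problem of dimension `n` such that every decision tree solving it relative
to `U` using attributes and proper hypotheses has depth at least `n - 1`. -/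
theorem stmt5 {A : Type} [Infinite A] (F : Set (A → Bool)) (hF : F.Infinite)
    (hnotI : ∀ r : ℕ, ∃ S : Set ((A → Bool) × Bool), OverF F S ∧ S.Finite ∧
      ¬ Consistent S ∧ (∀ T, T ⊂ S → Consistent T) ∧ r < S.ncard) :
    ∀ m : ℕ, ∃ n : ℕ, m ≤ n ∧ ∃ z : Fin n → A → Bool, (∀ i, z i ∈ F) ∧
      ∀ Γ : DT n, (∀ a : A, DT.Solves z a Γ) → DT.ProperHyps z Γ →
        n - 1 ≤ Γ.depth :=
  stmt5_general F hnotI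
end

section
/- Let U=(A,F) be a binary information system with finite independence dimension I(U), and let z=(f₁,…,fₙ) be a problem over U with n≥1. Then the number of consistent tuples |Δ_U(z)| satisfies |Δ_U(z)| ≤ (4n)^{I(U)}. -/
/-- A set `G` of attributes is independent if every assignment of Boolean values
to the attributes of `G` is realized by some element of `A`. -/
def Indep {A : Type} (G : Set (A → Bool)) : Prop :=
  ∀ c : (A → Bool) → Bool, ∃ a : A, ∀ g ∈ G, g a = c g

/-- if the independence dimension of `U` equals `d` (finite) and `z` is a
problem over `U` of dimension `n ≥ 1`, then `|Δ_U(z)| ≤ (4n)^d`. -/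
theorem stmt6 {A : Type} (F : Set (A → Bool)) (d : ℕ)
    (hd : IsGreatest {m | ∃ G ⊆ F, G.Finite ∧ Indep G ∧ G.ncard = m} d)
    {n : ℕ} (hn : 1 ≤ n) (z : Fin n → A → Bool) (hz : ∀ i, z i ∈ F) :
    Set.ncard {v : Fin n → Bool | ∃ a : A, ∀ i, z i a = v i} ≤ (4 * n) ^ d := by
  classical
  set Δ : Set (Fin n → Bool) := {v | ∃ a : A, ∀ i, z i a = v i} with hΔ
  set e : (Fin n → Bool) → Finset (Fin n) := fun v => Finset.univ.filter (fun i => v i) with he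
  have hmem_e : ∀ (v : Fin n → Bool) (i : Fin n), i ∈ e v ↔ v i = true := by
    intro v i; simp [he]
  have hinj : Function.Injective e := by
    intro v w hvw
    funext i
    have h : v i = true ↔ w i = true := (hmem_e v i).symm.trans (hvw ▸ hmem_e w i)
    revert h
    cases v i <;> cases w i <;> simp
  have hΔfin : Δ.Finite := Set.toFinite _
  set 𝒜 : Finset (Finset (Fin n)) := hΔfin.toFinset.image e with h𝒜
  have hcard : Δ.ncard = 𝒜.card := by
    rw [h𝒜, Finset.card_image_of_injective _ hinj,
      ← Set.ncard_coe_finset, Set.Finite.coe_toFinset]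
  -- key claim: vcDim 𝒜 ≤ d
  have hvc : 𝒜.vcDim ≤ d := by
    rw [Finset.vcDim]
    apply Finset.sup_le
    intro s hs
    rw [Finset.mem_shatterer] at hs
    -- shattering: ∀ t ⊆ s, ∃ u ∈ 𝒜, s ∩ u = t
    -- every u ∈ 𝒜 comes from some a : A
    have hu_mem : ∀ u ∈ 𝒜, ∃ a : A, ∀ i : Fin n, (i ∈ u ↔ z i a = true) := by
      intro u hu
      rw [h𝒜, Finset.mem_image] at hu
      obtain ⟨v, hv, rfl⟩ := hu
      rw [Set.Finite.mem_toFinset] at hv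
      obtain ⟨a, ha⟩ := hv
      exact ⟨a, fun i => by rw [hmem_e, ha i]⟩
    -- z is injective on s
    have hzinj : Set.InjOn z ↑s := by
      intro i hi j hj hij
      by_contra hne
      obtain ⟨u, hu, hsu⟩ := hs (t := s.erase j) (Finset.erase_subset _ _)
      obtain ⟨a, ha⟩ := hu_mem u hu
      have hiu : i ∈ s ∩ u := by
        rw [hsu]; exact Finset.mem_erase.mpr ⟨hne, hi⟩
      have hju : j ∉ s ∩ u := by
        rw [hsu]; simp
      have hiu' : z i a = true := (ha i).mp (Finset.mem_inter.mp hiu).2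
      have hju' : ¬ z j a = true := fun h =>
        hju (Finset.mem_inter.mpr ⟨hj, (ha j).mpr h⟩)
      rw [hij] at hiu'
      exact hju' hiu'
    -- the image family is independent
    set G : Set (A → Bool) := z '' ↑s with hG
    have hindep : Indep G := by
      intro c
      obtain ⟨u, hu, hsu⟩ := hs (t := s.filter (fun i => c (z i))) (Finset.filter_subset _ _)
      obtain ⟨a, ha⟩ := hu_mem u hu
      refine ⟨a, ?_⟩
      rintro g ⟨i, hi, rfl⟩
      have hi' : i ∈ s := Finset.mem_coe.mp hi
      have this1 : i ∈ s ∩ u ↔ i ∈ s.filter (fun i => c (z i)) := by rw [hsu]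
      simp only [Finset.mem_inter, Finset.mem_filter, hi', true_and] at this1
      have key : z i a = true ↔ c (z i) = true := (ha i).symm.trans this1
      revert key
      cases z i a <;> cases c (z i) <;> simp
    have hsub : G ⊆ F := by
      rintro g ⟨i, _, rfl⟩; exact hz i
    have hncard : G.ncard = s.card := by
      rw [hG, Set.ncard_image_of_injOn hzinj, Set.ncard_coe_finset]
    exact hd.2 ⟨G, hsub, (s.finite_toSet.image z), hindep, hncard⟩
  -- Sauer–Shelah and arithmetic
  have h1 : 𝒜.card ≤ ∑ k ∈ Finset.Iic 𝒜.vcDim, n.choose k := by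
    calc 𝒜.card ≤ 𝒜.shatterer.card := Finset.card_le_card_shatterer 𝒜
    _ ≤ ∑ k ∈ Finset.Iic 𝒜.vcDim, (Fintype.card (Fin n)).choose k :=
        Finset.card_shatterer_le_sum_vcDim
    _ = ∑ k ∈ Finset.Iic 𝒜.vcDim, n.choose k := by simp
  have h2 : ∑ k ∈ Finset.Iic 𝒜.vcDim, n.choose k ≤ ∑ k ∈ Finset.Iic d, n.choose k :=
    Finset.sum_le_sum_of_subset (Finset.Iic_subset_Iic.mpr hvc)
  have h3 : ∑ k ∈ Finset.Iic d, n.choose k ≤ (d + 1) * n ^ d := by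
    calc ∑ k ∈ Finset.Iic d, n.choose k ≤ ∑ _k ∈ Finset.Iic d, n ^ d := by
          apply Finset.sum_le_sum
          intro k hk
          exact (Nat.choose_le_pow n k).trans (Nat.pow_le_pow_right hn (Finset.mem_Iic.mp hk))
    _ = (d + 1) * n ^ d := by simp [Nat.card_Iic, mul_comm]
  have h4 : (d + 1) * n ^ d ≤ (4 * n) ^ d := by
    rw [mul_pow]
    apply Nat.mul_le_mul _ le_rfl
    calc d + 1 ≤ 2 ^ d := Nat.lt_two_pow_self (n := d)
    _ ≤ 4 ^ d := Nat.pow_le_pow_left (by norm_num) d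
  rw [hcard] at *
  omega
end

section
/- Let U=(A,F) be a binary information system with finite independence dimension I(U) that is r-i-reduced for some r≥2. Then for any problem z over U of dimension n, the minimum depth of a decision tree solving z relative to U using only proper hypotheses is at most r·I(U)·ln(4n); in particular h_U^{(4)}(n)=O(log n). -/
lemma bool_ne {a b : Bool} (h : a ≠ b) : a = !b := by
  cases a <;> cases b <;> simp_all

lemma Iic_eq_range_succ (d : ℕ) : Finset.Iic d = Finset.range (d+1) := by
  ext x; simp [Nat.lt_succ_iff]

lemma sum_choose_le_pow (n d : ℕ) : ∑ k ∈ Finset.Iic d, n.choose k ≤ (n+1)^d := by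
  rw [Iic_eq_range_succ]
  induction d with
  | zero => simp
  | succ d ih =>
    rw [Finset.sum_range_succ]
    have h1 : n.choose (d+1) ≤ n ^ (d+1) := Nat.choose_le_pow _ _
    have h2 : n ^ (d+1) ≤ n * (n+1)^d :=
      calc n ^ (d+1) = n * n ^ d := by ring
        _ ≤ n * (n+1)^d := Nat.mul_le_mul_left n (Nat.pow_le_pow_left (Nat.le_succ n) d)
    calc ∑ k ∈ Finset.range (d+1), n.choose k + n.choose (d+1) ≤ (n+1)^d + n * (n+1)^d :=
          Nat.add_le_add ih (h1.trans h2)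
      _ = (n+1)^(d+1) := by ring

open Classical in
noncomputable def Pset {A : Type} {n : ℕ} (z : Fin n → A → Bool) (E : Finset (Fin n × Bool)) :
    Finset (Fin n → Bool) :=
  Finset.univ.filter (fun p => (∃ a : A, ∀ i, z i a = p i) ∧ ∀ e ∈ E, p e.1 = e.2)

lemma mem_Pset {A : Type} {n : ℕ} {z : Fin n → A → Bool} {E : Finset (Fin n × Bool)}
    {p : Fin n → Bool} :
    p ∈ Pset z E ↔ (∃ a : A, ∀ i, z i a = p i) ∧ ∀ e ∈ E, p e.1 = e.2 := by
  simp [Pset]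

set_option maxHeartbeats 1000000 in
lemma core {A : Type} {F : Set (A → Bool)} {r : ℕ} (hr : 2 ≤ r) (hI : IReduced F r)
    {n : ℕ} (z : Fin n → A → Bool) (hz : ∀ i, z i ∈ F)
    (E : Finset (Fin n × Bool)) (hE : (Pset z E).Nonempty) :
    ∃ a : A, (∀ e ∈ E, z e.1 a = e.2) ∧
      ∀ i, (Pset z E).card ≤ r * ((Pset z E).filter (fun p => p i = z i a)).card := by
  classical
  set P := Pset z E with hP
  set N := P.card with hN
  have hN1 : 1 ≤ N := Finset.card_pos.mpr hE
  set cnt : Fin n → Bool → ℕ := fun i b => (P.filter (fun p => p i = b)).card with hcnt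
  have hcnt_add : ∀ i b, cnt i b + cnt i (!b) = N := by
    intro i b
    have h := Finset.card_filter_add_card_filter_not (s := P) (p := fun p => p i = b)
    have hneg : (P.filter (fun p => ¬ p i = b)) = P.filter (fun p => p i = !b) := by
      apply Finset.filter_congr; intro p _
      cases hb : p i <;> cases b <;> simp
    rw [hneg] at h
    exact h
  set maj : Fin n → Bool := fun i => if cnt i false ≤ cnt i true then true else false with hmaj
  have hmaj_ge : ∀ i, cnt i (!maj i) ≤ cnt i (maj i) := by
    intro i
    by_cases h : cnt i false ≤ cnt i true
    · have : maj i = true := if_pos h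
      rw [this]; simpa using h
    · have : maj i = false := if_neg h
      rw [this]; simpa using le_of_not_ge h
  have hmaj2 : ∀ i, N ≤ 2 * cnt i (maj i) := by
    intro i
    have h1 := hcnt_add i (maj i)
    have h2 := hmaj_ge i
    omega
  set I : Set (Fin n) := {i | r * cnt i (!maj i) < N} with hIdef
  set S : Set ((A → Bool) × Bool) :=
    ((fun e : Fin n × Bool => (z e.1, e.2)) '' (E : Set (Fin n × Bool))) ∪
      ((fun i => (z i, maj i)) '' I) with hS
  have hSover : OverF F S := by
    rintro e (⟨e', _, rfl⟩ | ⟨i, _, rfl⟩) <;> exact hz _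
  have hSfin : S.Finite :=
    Set.Finite.union ((E.finite_toSet).image _) ((Set.toFinite I).image _)
  have hCons : Consistent S := by
    by_contra hnc
    obtain ⟨T, hTS, hTnc, hTcard⟩ := hI S hSover hSfin hnc
    have hTfin : T.Finite := hSfin.subset hTS
    have key : ∀ p ∈ P, ∃ i ∈ I, (z i, maj i) ∈ T ∧ p i = !maj i := by
      intro p hp
      rw [hP, mem_Pset] at hp
      obtain ⟨⟨a, ha⟩, hpe⟩ := hp
      have h' : ¬ (∀ e ∈ T, e.1 a = e.2) := fun h => hTnc ⟨a, h⟩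
      push_neg at h'
      obtain ⟨e, heT, hev⟩ := h'
      rcases hTS heT with ⟨e', he'E, rfl⟩ | ⟨i, hiI, rfl⟩
      · exact absurd ((ha e'.1).trans (hpe e' he'E)) hev
      · refine ⟨i, hiI, heT, ?_⟩
        rw [← ha i]
        exact bool_ne hev
    set Tf : Finset ((A → Bool) × Bool) := hTfin.toFinset with hTf
    have hTfcard : Tf.card ≤ r := by
      have h := Set.ncard_eq_toFinset_card T hTfin
      rw [hTf, ← h]
      exact hTcard
    choose f hfI hfT hfv using key
    set fib : ((A → Bool) × Bool) → Finset (Fin n → Bool) := fun e =>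
      P.filter (fun p => ∃ h : p ∈ P, (z (f p h), maj (f p h)) = e) with hfib
    have hsub : P ⊆ Tf.biUnion fib := by
      intro p hp
      rw [Finset.mem_biUnion]
      refine ⟨(z (f p hp), maj (f p hp)), ?_, ?_⟩
      · rw [hTf, Set.Finite.mem_toFinset]; exact hfT p hp
      · rw [hfib, Finset.mem_filter]; exact ⟨hp, hp, rfl⟩
    have hcard1 : N ≤ ∑ e ∈ Tf, (fib e).card :=
      le_trans (Finset.card_le_card hsub) (Finset.card_biUnion_le)
    have hbound : ∀ e ∈ Tf, r * (fib e).card ≤ N - 1 := by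
      intro e _
      by_cases hne : (fib e).Nonempty
      · obtain ⟨p₀, hp₀⟩ := hne
        rw [hfib, Finset.mem_filter] at hp₀
        obtain ⟨hp₀P, h₀, he⟩ := hp₀
        set j := f p₀ h₀ with hj
        have hfsub : fib e ⊆ P.filter (fun q => q j = !maj j) := by
          intro q hq
          rw [hfib, Finset.mem_filter] at hq
          obtain ⟨hqP, hq', heq⟩ := hq
          rw [Finset.mem_filter]
          refine ⟨hqP, ?_⟩
          have hpair : (z (f q hq'), maj (f q hq')) = (z j, maj j) := heq.trans he.symm
          have hz1 : z (f q hq') = z j := congrArg Prod.fst hpair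
          have hz2 : maj (f q hq') = maj j := congrArg Prod.snd hpair
          -- q is realized, so q agrees at indices with equal attributes
          have hqreal : ∃ a : A, ∀ i, z i a = q i := ((hP ▸ mem_Pset).mp hqP).1
          obtain ⟨aq, haq⟩ := hqreal
          have : q (f q hq') = q j := by rw [← haq, ← haq, hz1]
          rw [← this, hfv q hq', hz2]
        have h3 : r * cnt j (!maj j) < N := hfI p₀ h₀
        have h4 : (fib e).card ≤ cnt j (!maj j) := Finset.card_le_card hfsub
        have := Nat.mul_le_mul_left r h4
        omega
      · rw [Finset.not_nonempty_iff_eq_empty] at hne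
        simp only [hne, Finset.card_empty, Nat.mul_zero]
        omega
    have hsum : r * N ≤ Tf.card * (N - 1) := by
      calc r * N ≤ r * ∑ e ∈ Tf, (fib e).card := Nat.mul_le_mul_left r hcard1
        _ = ∑ e ∈ Tf, r * (fib e).card := by rw [Finset.mul_sum]
        _ ≤ ∑ _e ∈ Tf, (N - 1) := Finset.sum_le_sum hbound
        _ = Tf.card * (N - 1) := by rw [Finset.sum_const, smul_eq_mul]
    have h5 : Tf.card * (N-1) ≤ r * (N-1) := Nat.mul_le_mul_right _ hTfcard
    have h6 : r * N ≤ r * (N-1) := le_trans hsum h5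
    have h7 : N ≤ N - 1 := Nat.le_of_mul_le_mul_left h6 (by omega)
    omega
  obtain ⟨a, ha⟩ := hCons
  refine ⟨a, ?_, ?_⟩
  · intro e heE
    exact ha (z e.1, e.2) (Or.inl ⟨e, heE, rfl⟩)
  · intro i
    by_cases hiI : i ∈ I
    · have hza : z i a = maj i := ha (z i, maj i) (Or.inr ⟨i, hiI, rfl⟩)
      calc N ≤ 2 * cnt i (maj i) := hmaj2 i
        _ ≤ r * cnt i (maj i) := Nat.mul_le_mul_right _ hr
        _ = r * (P.filter (fun p => p i = z i a)).card := by rw [hza]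
    · rw [hIdef, Set.mem_setOf_eq, not_lt] at hiI
      by_cases hza : z i a = maj i
      · calc N ≤ 2 * cnt i (maj i) := hmaj2 i
          _ ≤ r * cnt i (maj i) := Nat.mul_le_mul_right _ hr
          _ = r * (P.filter (fun p => p i = z i a)).card := by rw [hza]
      · have hza' : z i a = !maj i := bool_ne hza
        calc N ≤ r * cnt i (!maj i) := hiI
          _ = r * (P.filter (fun p => p i = z i a)).card := by rw [hza']
noncomputable def Bnd (r c : ℕ) : ℝ := if c ≤ 1 then 0 else 1 + r * Real.log c

lemma bnd_nonneg (r c : ℕ) : 0 ≤ Bnd r c := by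
  unfold Bnd; split_ifs with h
  · exact le_refl 0
  · have h2 : (2:ℝ) ≤ (c:ℝ) := by exact_mod_cast (by omega : 2 ≤ c)
    have hlog : 0 ≤ Real.log c := Real.log_nonneg (by linarith)
    positivity

lemma bnd_le {r c c' : ℕ} (hr : 2 ≤ r) (hc : 2 ≤ c) (h : (r:ℝ) * c' ≤ (r:ℝ) * c - c) :
    Bnd r c' ≤ (r:ℝ) * Real.log c := by
  have hrpos : (0:ℝ) < r := by positivity
  have hr2 : (2:ℝ) ≤ (r:ℝ) := by exact_mod_cast hr
  have hcpos : (1:ℝ) ≤ (c:ℝ) := by exact_mod_cast (by omega : 1 ≤ c)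
  have hlogc : 0 ≤ Real.log c := Real.log_nonneg hcpos
  unfold Bnd; split_ifs with h1
  · positivity
  · have hc' : (2:ℝ) ≤ (c':ℝ) := by exact_mod_cast (by omega : 2 ≤ c')
    have h2 : (c':ℝ) ≤ ((r:ℝ)-1)/r * c := by
      rw [div_mul_eq_mul_div, le_div_iff₀ hrpos]
      nlinarith
    have hpos : (0:ℝ) < ((r:ℝ)-1)/r := div_pos (by linarith) hrpos
    have h3 : Real.log c' ≤ Real.log (((r:ℝ)-1)/r * c) :=
      Real.log_le_log (by linarith) h2
    rw [Real.log_mul (ne_of_gt hpos) (ne_of_gt (by linarith : (0:ℝ) < c))] at h3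
    have h4 : Real.log (((r:ℝ)-1)/r) ≤ ((r:ℝ)-1)/r - 1 :=
      Real.log_le_sub_one_of_pos hpos
    have h5 : ((r:ℝ)-1)/r - 1 = -(1/r) := by field_simp; ring
    have h6 : Real.log c' ≤ Real.log c - 1/r := by
      rw [h5] at h4; linarith
    have h7 : (r:ℝ) * Real.log c' ≤ (r:ℝ) * (Real.log c - 1/r) :=
      mul_le_mul_of_nonneg_left h6 (le_of_lt hrpos)
    have h8 : (r:ℝ) * (1/r) = 1 := by field_simp
    nlinarith

set_option maxHeartbeats 1000000 in
lemma build {A : Type} {F : Set (A → Bool)} {r : ℕ} (hr : 2 ≤ r) (hI : IReduced F r)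
    {n : ℕ} (z : Fin n → A → Bool) (hz : ∀ i, z i ∈ F) :
    ∀ N : ℕ, ∀ E : Finset (Fin n × Bool), (Pset z E).card ≤ N →
    ∃ Γ : DT n, DT.NoAttr Γ ∧ DT.ProperHyps z Γ ∧
      (∀ a : A, (∀ e ∈ E, z e.1 a = e.2) → DT.Solves z a Γ) ∧
      (Γ.depth : ℝ) ≤ Bnd r ((Pset z E).card) := by
  classical
  intro N
  induction N with
  | zero =>
    intro E hE
    -- would give a pattern in Pset, contradiction, so Solves holds vacuously... but we must
    -- still produce a tree; handle together with card ≤ 1 below)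
    refine ⟨DT.leaf (fun _ => false), trivial, trivial, ?_, ?_⟩
    · intro a haE
      exfalso
      have hmem : (fun i => z i a) ∈ Pset z E :=
        mem_Pset.mpr ⟨⟨a, fun i => rfl⟩, fun e he => haE e he⟩
      have : (Pset z E).card = 0 := Nat.le_zero.mp hE
      rw [Finset.card_eq_zero] at this
      rw [this] at hmem
      exact absurd hmem (Finset.notMem_empty _)
    · show ((0:ℕ):ℝ) ≤ Bnd r (Pset z E).card
      simpa using bnd_nonneg r _
  | succ N ih =>
    intro E hE
    by_cases h1 : (Pset z E).card ≤ 1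
    · -- leaf case
      by_cases hne : (Pset z E).Nonempty
      · refine ⟨DT.leaf hne.choose, trivial, trivial, ?_, ?_⟩
        · intro a haE
          have hmem : (fun i => z i a) ∈ Pset z E :=
            mem_Pset.mpr ⟨⟨a, fun i => rfl⟩, fun e he => haE e he⟩
          have heq : hne.choose = fun i => z i a :=
            Finset.card_le_one.mp h1 _ hne.choose_spec _ hmem
          intro i
          exact congrFun heq i
        · show ((0:ℕ):ℝ) ≤ Bnd r (Pset z E).card
          simpa using bnd_nonneg r _
      · refine ⟨DT.leaf (fun _ => false), trivial, trivial, ?_, ?_⟩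
        · intro a haE
          exfalso
          exact hne ⟨_, mem_Pset.mpr ⟨⟨a, fun i => rfl⟩, fun e he => haE e he⟩⟩
        · show ((0:ℕ):ℝ) ≤ Bnd r (Pset z E).card
          simpa using bnd_nonneg r _
    · -- hypothesis query case
      push_neg at h1
      set c := (Pset z E).card with hc
      clear_value c
      have hc2 : 2 ≤ c := h1
      have hne : (Pset z E).Nonempty := Finset.card_pos.mp (by omega)
      obtain ⟨a, haE, hcnt⟩ := core hr hI z hz E hne
      -- child systems
      have hEi : ∀ i : Fin n, Pset z (insert (i, !z i a) E)
          = (Pset z E).filter (fun p => p i = !z i a) := by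
        intro i
        ext p
        rw [Finset.mem_filter, mem_Pset, mem_Pset]
        constructor
        · rintro ⟨hreal, hsat⟩
          exact ⟨⟨hreal, fun e he => hsat e (Finset.mem_insert_of_mem he)⟩,
            hsat (i, !z i a) (Finset.mem_insert_self _ _)⟩
        · rintro ⟨⟨hreal, hsat⟩, hpi⟩
          refine ⟨hreal, ?_⟩
          intro e he
          rcases Finset.mem_insert.mp he with h | h
          · rw [h]; exact hpi
          · exact hsat e h
      have hcard_i : ∀ i : Fin n, (Pset z (insert (i, !z i a) E)).card +
          ((Pset z E).filter (fun p => p i = z i a)).card = c := by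
        intro i
        rw [hEi i]
        have h := Finset.card_filter_add_card_filter_not (s := Pset z E)
          (p := fun p => p i = z i a)
        have hneg : ((Pset z E).filter (fun p => ¬ p i = z i a))
            = (Pset z E).filter (fun p => p i = !z i a) := by
          apply Finset.filter_congr; intro p _
          cases hb : p i <;> cases hd : z i a <;> simp
        rw [hneg] at h
        rw [hc]
        exact (Nat.add_comm _ _).trans h
      have helim : ∀ i : Fin n, c ≤ r * ((Pset z E).filter (fun p => p i = z i a)).card :=
        fun i => hc ▸ hcnt i
      have h4 : ∀ i : Fin n, 1 ≤ ((Pset z E).filter (fun p => p i = z i a)).card := by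
        intro i
        have h3 := helim i
        rcases Nat.eq_zero_or_pos (((Pset z E).filter (fun p => p i = z i a)).card) with h0 | h0
        · rw [h0, Nat.mul_zero] at h3
          omega
        · exact h0
      have hlt : ∀ i : Fin n, (Pset z (insert (i, !z i a) E)).card ≤ N := by
        intro i
        have h5 : (Pset z (insert (i, !z i a) E)).card + 1 ≤ c :=
          le_trans (Nat.add_le_add_left (h4 i) _) (le_of_eq (hcard_i i))
        exact Nat.le_of_succ_le_succ (le_trans h5 hE)
      have H : ∀ i : Fin n, ∃ Γ : DT n, DT.NoAttr Γ ∧ DT.ProperHyps z Γ ∧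
          (∀ b : A, (∀ e ∈ insert (i, !z i a) E, z e.1 b = e.2) → DT.Solves z b Γ) ∧
          (Γ.depth : ℝ) ≤ Bnd r ((Pset z (insert (i, !z i a) E)).card) :=
        fun i => ih (insert (i, !z i a) E) (hlt i)
      choose Γs hNo hPr hSo hDe using H
      refine ⟨DT.hyp (fun i => z i a) (DT.leaf (fun i => z i a)) Γs,
        ⟨trivial, fun i => hNo i⟩,
        ⟨⟨a, fun i => rfl⟩, trivial, fun i => hPr i⟩, ?_, ?_⟩
      · intro b hbE
        refine ⟨fun hb i => (hb i).symm, ?_⟩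
        intro i hneq
        apply hSo i b
        intro e he
        rcases Finset.mem_insert.mp he with h | h
        · rw [h]
          exact bool_ne hneq
        · exact hbE e h
      · -- depth bound
        have hdepth : (DT.hyp (fun i => z i a) (DT.leaf (fun i => z i a)) Γs).depth
            = 1 + (Finset.univ.sup fun i => (Γs i).depth) := by
          show 1 + max (DT.depth (DT.leaf fun i => z i a)) _ = _
          show 1 + max 0 _ = _
          rw [Nat.max_comm, Nat.max_zero]
        rw [hdepth]
        have hBc : Bnd r c = 1 + r * Real.log c := by
          unfold Bnd; rw [if_neg (by omega)]
        rw [hBc]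
        push_cast
        have hsup : ∀ i : Fin n, ((Γs i).depth : ℝ) ≤ (r:ℝ) * Real.log c := by
          intro i
          refine (hDe i).trans ?_
          apply bnd_le hr hc2
          have h2 := hcard_i i
          have h3 := helim i
          have h2' : ((Pset z (insert (i, !z i a) E)).card : ℝ)
              + (((Pset z E).filter (fun p => p i = z i a)).card : ℝ) = (c:ℝ) := by
            exact_mod_cast h2
          have h3' : (c:ℝ) ≤ (r:ℝ) * (((Pset z E).filter (fun p => p i = z i a)).card : ℝ) := by
            exact_mod_cast h3
          nlinarith
        have hsupR : ((Finset.univ.sup fun i => (Γs i).depth : ℕ) : ℝ)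
            ≤ (r:ℝ) * Real.log c := by
          rcases (Finset.univ : Finset (Fin n)).eq_empty_or_nonempty with hu | hu
          · have h2 : (1:ℝ) ≤ (c:ℝ) := by exact_mod_cast (by omega : 1 ≤ c)
            have h3 : (0:ℝ) ≤ (r:ℝ) * Real.log c :=
              mul_nonneg (Nat.cast_nonneg r) (Real.log_nonneg h2)
            rw [hu, Finset.sup_empty]
            simpa using h3
          · obtain ⟨i₀, _, hi₀⟩ := Finset.exists_mem_eq_sup Finset.univ hu
              (fun i => (Γs i).depth)
            rw [hi₀]
            exact hsup i₀
        linarith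

lemma one_le_d {A : Type} {F : Set (A → Bool)} {d : ℕ}
    (hd : IsGreatest {m | ∃ G ⊆ F, G.Finite ∧ Indep G ∧ G.ncard = m} d)
    {n : ℕ} (z : Fin n → A → Bool) (hz : ∀ i, z i ∈ F)
    (h2 : 2 ≤ (Pset z (∅ : Finset (Fin n × Bool))).card) : 1 ≤ d := by
  classical
  obtain ⟨p, hp, q, hq, hpq⟩ := Finset.one_lt_card.mp h2
  have hex : ∃ i, p i ≠ q i := by
    by_contra h
    push_neg at h
    exact hpq (funext h)
  obtain ⟨i, hi⟩ := hex
  obtain ⟨⟨a, ha⟩, -⟩ := mem_Pset.mp hp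
  obtain ⟨⟨b, hb⟩, -⟩ := mem_Pset.mp hq
  have hab : z i a ≠ z i b := by rw [ha i, hb i]; exact hi
  have hindep : Indep ({z i} : Set (A → Bool)) := by
    intro c
    by_cases hca : z i a = c (z i)
    · exact ⟨a, fun g hg => by rw [Set.mem_singleton_iff] at hg; rw [hg]; exact hca⟩
    · have h3 : z i b = c (z i) := by
        have ha1 : z i a = !c (z i) := bool_ne hca
        have hb1 : z i b = !(z i a) := bool_ne (Ne.symm hab)
        rw [hb1, ha1, Bool.not_not]
      exact ⟨b, fun g hg => by rw [Set.mem_singleton_iff] at hg; rw [hg]; exact h3⟩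
  exact hd.2 ⟨{z i}, Set.singleton_subset_iff.mpr (hz i), Set.finite_singleton _, hindep,
    Set.ncard_singleton _⟩

set_option maxHeartbeats 1000000 in
lemma patterns_card_le {A : Type} {F : Set (A → Bool)} {d : ℕ}
    (hd : IsGreatest {m | ∃ G ⊆ F, G.Finite ∧ Indep G ∧ G.ncard = m} d)
    {n : ℕ} (z : Fin n → A → Bool) (hz : ∀ i, z i ∈ F) :
    (Pset z (∅ : Finset (Fin n × Bool))).card ≤ (n+1)^d := by
  classical
  set P := Pset z (∅ : Finset (Fin n × Bool)) with hPdef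
  set φ : (Fin n → Bool) → Finset (Fin n) := fun p => Finset.univ.filter (fun i => p i = true)
    with hφ
  have hφmem : ∀ p i, i ∈ φ p ↔ p i = true := by
    intro p i; rw [hφ]; simp
  have hφinj : Function.Injective φ := by
    intro p q h
    funext i
    have h1 : (i ∈ φ p) ↔ (i ∈ φ q) := by rw [h]
    rw [hφmem, hφmem] at h1
    cases hp1 : p i <;> cases hq1 : q i <;> simp_all
  set 𝒜 : Finset (Finset (Fin n)) := P.image φ with h𝒜
  have hcard : P.card = 𝒜.card := (Finset.card_image_of_injective P hφinj).symm
  have hvc : 𝒜.vcDim ≤ d := by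
    apply Finset.sup_le
    intro s hs
    rw [Finset.mem_shatterer] at hs
    -- every boolean assignment on s is realized
    have hreal : ∀ t ⊆ s, ∃ a : A, ∀ i ∈ s, (z i a = true ↔ i ∈ t) := by
      intro t ht
      obtain ⟨u, hu𝒜, hsu⟩ := hs ht
      rw [h𝒜, Finset.mem_image] at hu𝒜
      obtain ⟨p, hpP, rfl⟩ := hu𝒜
      obtain ⟨⟨a, ha⟩, -⟩ := mem_Pset.mp hpP
      refine ⟨a, fun i hi => ?_⟩
      have h1 : i ∈ t ↔ i ∈ s ∧ i ∈ φ p := by rw [← hsu, Finset.mem_inter]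
      rw [ha i]
      rw [hφmem] at h1
      constructor
      · intro hzi; exact h1.mpr ⟨hi, hzi⟩
      · intro hit; exact (h1.mp hit).2
    -- z is injective on s
    have hinj : ∀ i ∈ s, ∀ j ∈ s, z i = z j → i = j := by
      intro i hi j hj hij
      obtain ⟨a, ha⟩ := hreal {i} (Finset.singleton_subset_iff.mpr hi)
      have h1 : z i a = true := (ha i hi).mpr (Finset.mem_singleton_self i)
      have h2 : z j a = true := by rw [← hij]; exact h1
      have h3 : j ∈ ({i} : Finset (Fin n)) := (ha j hj).mp h2
      exact (Finset.mem_singleton.mp h3).symm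
    -- build independent set
    set G : Set (A → Bool) := ↑(s.image z) with hG
    have hGsub : G ⊆ F := by
      intro g hg
      rw [hG, Finset.coe_image] at hg
      obtain ⟨i, _, rfl⟩ := hg
      exact hz i
    have hGindep : Indep G := by
      intro c
      obtain ⟨a, ha⟩ := hreal (s.filter (fun i => c (z i) = true)) (Finset.filter_subset _ _)
      refine ⟨a, fun g hg => ?_⟩
      rw [hG, Finset.coe_image] at hg
      obtain ⟨i, hi, rfl⟩ := hg
      rw [Finset.mem_coe] at hi
      have h1 := ha i hi
      rw [Finset.mem_filter] at h1
      cases hc : c (z i)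
      · cases hzi : z i a
        · rfl
        · exfalso
          have := (h1.mp hzi).2
          rw [hc] at this
          exact Bool.false_ne_true this
      · exact h1.mpr ⟨hi, hc⟩
    have hGcard : G.ncard = s.card := by
      rw [hG, Set.ncard_coe_finset]
      apply Finset.card_image_of_injOn
      intro i hi j hj hij
      exact hinj i hi j hj hij
    exact hGcard ▸ hd.2 ⟨G, hGsub, (s.image z).finite_toSet, hGindep, rfl⟩
  calc P.card = 𝒜.card := hcard
    _ ≤ 𝒜.shatterer.card := Finset.card_le_card_shatterer 𝒜
    _ ≤ ∑ k ∈ Finset.Iic 𝒜.vcDim, (Fintype.card (Fin n)).choose k :=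
        Finset.card_shatterer_le_sum_vcDim
    _ ≤ ∑ k ∈ Finset.Iic d, (Fintype.card (Fin n)).choose k := by
        apply Finset.sum_le_sum_of_subset
        intro k hk
        rw [Finset.mem_Iic] at hk ⊢
        omega
    _ = ∑ k ∈ Finset.Iic d, n.choose k := by rw [Fintype.card_fin]
    _ ≤ (n+1)^d := sum_choose_le_pow n d

/-- if `U` has finite independence dimension `d` and is `r`-i-reduced with
`r ≥ 2`, then every problem of dimension `n` over `U` is solved by a decision tree
using only proper hypotheses of depth at most `r * d * ln (4n)`. -/
theorem stmt7 {A : Type} (F : Set (A → Bool)) (r d : ℕ) (hr : 2 ≤ r)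
    (hI : IReduced F r)
    (hd : IsGreatest {m | ∃ G ⊆ F, G.Finite ∧ Indep G ∧ G.ncard = m} d)
    {n : ℕ} (z : Fin n → A → Bool) (hz : ∀ i, z i ∈ F) :
    ∃ Γ : DT n, (∀ a : A, DT.Solves z a Γ) ∧ DT.NoAttr Γ ∧ DT.ProperHyps z Γ ∧
      (Γ.depth : ℝ) ≤ (r : ℝ) * (d : ℝ) * Real.log (4 * n) := by
  classical
  obtain ⟨Γ, hNo, hPr, hSo, hDe⟩ :=
    build hr hI z hz ((Pset z (∅ : Finset (Fin n × Bool))).card) ∅ le_rfl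
  refine ⟨Γ, fun a => hSo a (fun e he => absurd he (Finset.notMem_empty e)), hNo, hPr, ?_⟩
  refine le_trans hDe ?_
  by_cases h1 : (Pset z (∅ : Finset (Fin n × Bool))).card ≤ 1
  · have hB : Bnd r (Pset z (∅ : Finset (Fin n × Bool))).card = 0 := by
      unfold Bnd; rw [if_pos h1]
    rw [hB]
    apply mul_nonneg (mul_nonneg (Nat.cast_nonneg r) (Nat.cast_nonneg d))
    rcases Nat.eq_zero_or_pos n with hn | hn
    · rw [hn]; norm_num
    · apply Real.log_nonneg
      have : (1:ℝ) ≤ (n:ℝ) := by exact_mod_cast hn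
      linarith
  · push_neg at h1
    have h2 : 2 ≤ (Pset z (∅ : Finset (Fin n × Bool))).card := h1
    have hd1 : 1 ≤ d := one_le_d hd z hz h2
    have hn1 : 1 ≤ n := by
      by_contra hn
      push_neg at hn
      have hn0 : n = 0 := by omega
      subst hn0
      have hcu := Finset.card_le_univ (Pset z (∅ : Finset (Fin 0 × Bool)))
      have hcard1 : Fintype.card (Fin 0 → Bool) = 1 := by simp
      rw [hcard1] at hcu
      exact absurd (lt_of_lt_of_le h2 hcu) (by norm_num)
    have hsauer : (Pset z (∅ : Finset (Fin n × Bool))).card ≤ (n+1)^d :=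
      patterns_card_le hd z hz
    have hB : Bnd r (Pset z (∅ : Finset (Fin n × Bool))).card
        = 1 + r * Real.log ((Pset z (∅ : Finset (Fin n × Bool))).card) := by
      unfold Bnd
      rw [if_neg (by omega)]
    rw [hB]
    set N₀ := (Pset z (∅ : Finset (Fin n × Bool))).card with hN₀
    clear_value N₀
    have hN₀pos : (0:ℝ) < (N₀:ℝ) := by
      have : (2:ℝ) ≤ (N₀:ℝ) := by exact_mod_cast h2
      linarith
    have hn1R : (1:ℝ) ≤ (n:ℝ) := by exact_mod_cast hn1
    have hlogN : Real.log N₀ ≤ (d:ℝ) * Real.log ((n:ℝ)+1) := by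
      have hcast : ((N₀:ℝ)) ≤ ((n:ℝ)+1)^d := by
        have := hsauer
        push_cast at this ⊢
        exact_mod_cast this
      calc Real.log N₀ ≤ Real.log (((n:ℝ)+1)^d) := Real.log_le_log hN₀pos hcast
        _ = (d:ℝ) * Real.log ((n:ℝ)+1) := by rw [Real.log_pow]
    have hlog2 : Real.log 2 ≤ Real.log (4*(n:ℝ)) - Real.log ((n:ℝ)+1) := by
      have hmul : (2:ℝ)*((n:ℝ)+1) ≤ 4*(n:ℝ) := by linarith
      have h3 : Real.log 2 + Real.log ((n:ℝ)+1) = Real.log (2*((n:ℝ)+1)) :=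
        (Real.log_mul (by norm_num) (by linarith)).symm
      have h4 : Real.log (2*((n:ℝ)+1)) ≤ Real.log (4*(n:ℝ)) :=
        Real.log_le_log (by linarith) hmul
      linarith
    have hl2 : (1:ℝ)/2 ≤ Real.log 2 := by
      have := Real.log_two_gt_d9
      linarith
    have hrd : (2:ℝ) ≤ (r:ℝ)*(d:ℝ) := by
      have hnat : 2 ≤ r * d := le_trans hr (Nat.le_mul_of_pos_right r (by omega))
      exact_mod_cast hnat
    have hlogpos : 0 ≤ Real.log ((n:ℝ)+1) := Real.log_nonneg (by linarith)
    have e1 : (r:ℝ) * Real.log N₀ ≤ (r:ℝ) * ((d:ℝ) * Real.log ((n:ℝ)+1)) :=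
      mul_le_mul_of_nonneg_left hlogN (Nat.cast_nonneg r)
    have e2 : (r:ℝ)*(d:ℝ) * Real.log 2
        ≤ (r:ℝ)*(d:ℝ) * (Real.log (4*(n:ℝ)) - Real.log ((n:ℝ)+1)) :=
      mul_le_mul_of_nonneg_left hlog2 (by positivity)
    have e3 : (1:ℝ) ≤ (r:ℝ)*(d:ℝ) * Real.log 2 := by nlinarith
    nlinarith [e1, e2, e3]
end

section
/- Let U=(A,F) be a binary information system, Δ ⊆ {0,1}ⁿ a set of consistent tuples for a problem z=(f₁,…,fₙ) with |Δ|≥2, and for each i choose δᵢ∈{0,1} such that |Δ(fᵢ,δᵢ)| ≥ |Δ(fᵢ,¬δᵢ)|. Suppose the system H={f₁(x)=δ₁,…,fₙ(x)=δₙ} is inconsistent on A and U is r-i-reduced. Then there exists an index i such that |Δ(fᵢ,¬δᵢ)| ≥ |Δ|/r. -/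
/-- if `Δ` is a set of at least two consistent tuples, `δᵢ` is chosen by
majority, the system `H = {f₁(x)=δ₁, …, fₙ(x)=δₙ}` is inconsistent, and `U` is
`r`-i-reduced, then some attribute `fᵢ` satisfies `|Δ(fᵢ, ¬δᵢ)| ≥ |Δ|/r`. -/
theorem stmt8 {A : Type} (F : Set (A → Bool)) (r : ℕ) (hI : IReduced F r)
    {n : ℕ} (z : Fin n → A → Bool) (hz : ∀ i, z i ∈ F)
    (Δ : Set (Fin n → Bool)) (hcons : ∀ v ∈ Δ, ∃ a : A, ∀ i, z i a = v i)
    (hcard : 2 ≤ Δ.ncard) (δ : Fin n → Bool)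
    (hmaj : ∀ i, ({v ∈ Δ | v i = !(δ i)}).ncard ≤ ({v ∈ Δ | v i = δ i}).ncard)
    (hH : ¬ ∃ a : A, ∀ i, z i a = δ i) :
    ∃ i, (Δ.ncard : ℝ) / (r : ℝ) ≤ (({v ∈ Δ | v i = !(δ i)}).ncard : ℝ) := by 
  classical
  -- Δ is nonempty
  have hΔfin : Δ.Finite := Set.toFinite Δ
  have h0 : Δ.ncard ≠ 0 := by omega
  have hΔne : Δ.Nonempty := Set.nonempty_of_ncard_ne_zero h0
  -- the system H
  set H : Set ((A → Bool) × Bool) := Set.range (fun i => (z i, δ i)) with hHdef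
  have hHover : OverF F H := by
    rintro e ⟨i, rfl⟩; exact hz i
  have hHfin : H.Finite := Set.finite_range _
  have hHincons : ¬ Consistent H := by
    rintro ⟨a, ha⟩
    exact hH ⟨a, fun i => ha (z i, δ i) ⟨i, rfl⟩⟩
  obtain ⟨T, hTH, hTincons, hTcard⟩ := hI H hHover hHfin hHincons
  have hTfin : T.Finite := hHfin.subset hTH
  -- T is nonempty (else A is empty, contradicting nonempty Δ being consistent)
  have hTne : T.Nonempty := by
    by_contra hne
    rw [Set.not_nonempty_iff_eq_empty] at hne
    obtain ⟨v, hv⟩ := hΔne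
    obtain ⟨a, _⟩ := hcons v hv
    exact hTincons ⟨a, by simp [hne]⟩
  obtain ⟨e0, he0⟩ := hTne
  obtain ⟨i0, hi0⟩ := hTH he0
  -- choice of index for each equation in T
  have hchoice : ∀ e ∈ T, ∃ i : Fin n, (z i, δ i) = e := fun e he => hTH he
  set f : ((A → Bool) × Bool) → Fin n :=
    fun e => if h : ∃ i : Fin n, (z i, δ i) = e then h.choose else i0 with hf
  set Tf : Finset ((A → Bool) × Bool) := hTfin.toFinset with hTf
  set I : Finset (Fin n) := Tf.image f with hI'
  have hIcard : I.card ≤ r := le_trans (Finset.card_image_le) (by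
    rw [hTf, ← Set.ncard_eq_toFinset_card _ hTfin]; exact hTcard)
  set Δf : Finset (Fin n → Bool) := hΔfin.toFinset with hΔf
  set Bad : Fin n → Finset (Fin n → Bool) :=
    fun i => Δf.filter (fun v => v i = !(δ i)) with hBad
  -- coverage
  have hcover : Δf ⊆ I.biUnion Bad := by
    intro v hv
    have hvΔ : v ∈ Δ := by rwa [hΔf, Set.Finite.mem_toFinset] at hv
    obtain ⟨a, ha⟩ := hcons v hvΔ
    have : ¬ ∀ e ∈ T, e.1 a = e.2 := fun h => hTincons ⟨a, h⟩
    push_neg at this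
    obtain ⟨e, heT, hea⟩ := this
    have hex : ∃ i : Fin n, (z i, δ i) = e := hTH heT
    have hspec : (z (f e), δ (f e)) = e := by
      rw [hf]; simp only [hex, dif_pos]; exact hex.choose_spec
    have h1 : v (f e) ≠ δ (f e) := by
      intro h
      apply hea
      rw [← hspec]
      simp [ha (f e), h]
    have h2 : v (f e) = !(δ (f e)) := by
      cases hδ : δ (f e) <;> cases hv' : v (f e) <;> simp_all
    refine Finset.mem_biUnion.2 ⟨f e, ?_, ?_⟩
    · exact Finset.mem_image_of_mem f (by rwa [hTf, Set.Finite.mem_toFinset])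
    · exact Finset.mem_filter.2 ⟨hv, h2⟩
  -- pick a maximizing index in I
  have hIne : I.Nonempty := by
    by_contra hne
    rw [Finset.not_nonempty_iff_eq_empty] at hne
    obtain ⟨v, hv⟩ := hΔne
    have : v ∈ Δf := by rwa [hΔf, Set.Finite.mem_toFinset]
    have := hcover this
    rw [hne] at this
    simp at this
  obtain ⟨i, hiI, himax⟩ := Finset.exists_max_image I (fun j => (Bad j).card) hIne
  have hr : 0 < r := lt_of_lt_of_le (Finset.card_pos.2 hIne) hIcard
  -- counting
  have hcount : Δf.card ≤ r * (Bad i).card := by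
    calc Δf.card ≤ (I.biUnion Bad).card := Finset.card_le_card hcover
    _ ≤ ∑ j ∈ I, (Bad j).card := Finset.card_biUnion_le
    _ ≤ ∑ _j ∈ I, (Bad i).card := Finset.sum_le_sum (fun j hj => himax j hj)
    _ = I.card * (Bad i).card := by rw [Finset.sum_const, smul_eq_mul]
    _ ≤ r * (Bad i).card := Nat.mul_le_mul_right _ hIcard
  refine ⟨i, ?_⟩
  have hΔcard : Δ.ncard = Δf.card := by
    rw [hΔf, Set.ncard_eq_toFinset_card _ hΔfin]
  have hsetBad : {v ∈ Δ | v i = !(δ i)}.ncard = (Bad i).card := by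
    have : {v ∈ Δ | v i = !(δ i)} = ↑(Bad i) := by
      ext v
      simp [hBad, hΔf, Set.Finite.mem_toFinset]
    rw [this, Set.ncard_coe_finset]
  rw [div_le_iff₀ (by exact_mod_cast hr), hΔcard, hsetBad]
  calc (Δf.card : ℝ) ≤ ((r * (Bad i).card : ℕ) : ℝ) := by exact_mod_cast hcount
  _ = ((Bad i).card : ℝ) * r := by push_cast; ring
end

section
/- Let U=(A,F) be a binary information system which is r-i-reduced, let Δ=Δ_U(z) with |Δ|≥2, and let H={f₁(x)=δ₁,…,fₙ(x)=δₙ} be an equation system over U where each δᵢ is chosen so that |Δ(fᵢ,δᵢ)|≥|Δ(fᵢ,¬δᵢ)|. Call fᵢ unbalanced if |Δ(fᵢ,¬δᵢ)|<|Δ|/r, and let H_u be the subsystem of H consisting of all equations fᵢ(x)=δᵢ with unbalanced attributes fᵢ. Then H_u is consistent on A. -/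
/-- with `Δ = Δ_U(z)`, `|Δ| ≥ 2`, `δᵢ` chosen by majority and `U`
`r`-i-reduced, the subsystem of `H = {f₁(x)=δ₁, …}` consisting of the equations with
unbalanced attributes (those with `|Δ(fᵢ, ¬δᵢ)| < |Δ|/r`) is consistent on `A`. -/
theorem stmt9 {A : Type} (F : Set (A → Bool)) (r : ℕ) (hI : IReduced F r)
    {n : ℕ} (z : Fin n → A → Bool) (hz : ∀ i, z i ∈ F)
    (Δ : Set (Fin n → Bool)) (hΔ : Δ = {v | ∃ a : A, ∀ i, z i a = v i})
    (hcard : 2 ≤ Δ.ncard) (δ : Fin n → Bool)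
    (hmaj : ∀ i, ({v ∈ Δ | v i = !(δ i)}).ncard ≤ ({v ∈ Δ | v i = δ i}).ncard) :
    ∃ a : A, ∀ i,
      (({v ∈ Δ | v i = !(δ i)}).ncard : ℝ) < (Δ.ncard : ℝ) / (r : ℝ) →
        z i a = δ i := by
  classical
  -- Δ is nonempty, hence A is nonempty
  have hΔne : Δ.Nonempty := Set.nonempty_of_ncard_ne_zero (by omega)
  obtain ⟨v0, hv0⟩ := hΔne
  have hv0' : ∃ a : A, ∀ i, z i a = v0 i := by rw [hΔ] at hv0; exact hv0
  obtain ⟨a0, ha0⟩ := hv0'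
  by_contra hcon
  push_neg at hcon
  -- the system of unbalanced equations
  set cond : Fin n → Prop := fun i =>
    (({v ∈ Δ | v i = !(δ i)}).ncard : ℝ) < (Δ.ncard : ℝ) / (r : ℝ) with hcond
  set S : Set ((A → Bool) × Bool) :=
    {e | ∃ i : Fin n, cond i ∧ e = (z i, δ i)} with hS
  have hSF : OverF F S := by rintro e ⟨i, _, rfl⟩; exact hz i
  have hSfin : S.Finite := by
    apply Set.Finite.subset (Set.finite_range (fun i : Fin n => (z i, δ i)))
    rintro e ⟨i, _, rfl⟩; exact ⟨i, rfl⟩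
  have hScon : ¬ Consistent S := by
    rintro ⟨a, ha⟩
    obtain ⟨i, hi, hne⟩ := hcon a
    exact hne (ha (z i, δ i) ⟨i, hi, rfl⟩)
  obtain ⟨T, hTS, hTcon, hTr⟩ := hI S hSF hSfin hScon
  have hTne : T.Nonempty := by
    rcases Set.eq_empty_or_nonempty T with h | h
    · exact absurd ⟨a0, by simp [h]⟩ hTcon
    · exact h
  have hTfin : T.Finite := hSfin.subset hTS
  obtain ⟨e0, he0⟩ := hTne
  obtain ⟨i0, hi0, _⟩ := hTS he0
  have hr : 0 < r := by
    by_contra h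
    push_neg at h
    interval_cases r
    rw [hcond] at hi0
    rw [Nat.cast_zero, div_zero] at hi0
    have : (0:ℝ) ≤ (({v ∈ Δ | v i0 = !(δ i0)}).ncard : ℝ) := Nat.cast_nonneg _
    linarith
  -- choose an index for each equation of T
  have hsel : ∀ e ∈ T, ∃ i : Fin n, cond i ∧ e = (z i, δ i) := fun e he => hTS he
  choose idx hidx1 hidx2 using hsel
  set Tf : Finset ((A → Bool) × Bool) := hTfin.toFinset with hTf
  set J : Finset (Fin n) :=
    Tf.attach.image (fun e => idx e.1 (hTfin.mem_toFinset.mp e.2)) with hJ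
  have hJcard : J.card ≤ r := by
    calc J.card ≤ Tf.attach.card := Finset.card_image_le
    _ = Tf.card := Finset.card_attach
    _ = T.ncard := (Set.ncard_eq_toFinset_card T hTfin).symm
    _ ≤ r := hTr
  have hJne : J.Nonempty := by
    refine ⟨idx e0 he0, ?_⟩
    rw [hJ]
    exact Finset.mem_image.mpr ⟨⟨e0, hTfin.mem_toFinset.mpr he0⟩, Finset.mem_attach _ _, rfl⟩
  have hJcond : ∀ i ∈ J, cond i := by
    intro i hi
    rw [hJ] at hi
    obtain ⟨e, _, rfl⟩ := Finset.mem_image.mp hi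
    exact hidx1 _ _
  -- covering: every tuple in Δ violates some equation of T
  have hcover : ∀ v ∈ Δ, ∃ i ∈ J, v i = !(δ i) := by
    intro v hv
    rw [hΔ] at hv
    obtain ⟨a, ha⟩ := hv
    have : ¬ ∀ e ∈ T, e.1 a = e.2 := fun h => hTcon ⟨a, h⟩
    push_neg at this
    obtain ⟨e, he, hne⟩ := this
    refine ⟨idx e he, ?_, ?_⟩
    · rw [hJ]
      exact Finset.mem_image.mpr ⟨⟨e, hTfin.mem_toFinset.mpr he⟩, Finset.mem_attach _ _, rfl⟩
    · have heq := hidx2 e he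
      rw [heq] at hne
      simp only at hne
      have hbool : z (idx e he) a = !(δ (idx e he)) := by
        revert hne; cases z (idx e he) a <;> cases δ (idx e he) <;> simp
      rw [← ha]; exact hbool
  -- counting
  have hΔfin : Δ.Finite := Set.toFinite Δ
  set Δf : Finset (Fin n → Bool) := hΔfin.toFinset with hΔf
  set B : Fin n → Finset (Fin n → Bool) :=
    fun i => Δf.filter (fun v => v i = !(δ i)) with hB
  have hcover' : Δf ⊆ J.biUnion B := by
    intro v hv
    obtain ⟨i, hi, hvi⟩ := hcover v (hΔfin.mem_toFinset.mp hv)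
    exact Finset.mem_biUnion.mpr ⟨i, hi, Finset.mem_filter.mpr ⟨hv, hvi⟩⟩
  have h1 : Δf.card ≤ ∑ i ∈ J, (B i).card :=
    (Finset.card_le_card hcover').trans Finset.card_biUnion_le
  have hBcard : ∀ i, (B i).card = ({v ∈ Δ | v i = !(δ i)}).ncard := by
    intro i
    have : {v ∈ Δ | v i = !(δ i)} = ↑(B i) := by
      ext v
      simp only [Set.mem_setOf_eq, hB, Finset.coe_filter, hΔf,
        Set.Finite.mem_toFinset]
    rw [this, Set.ncard_coe_finset]
  have hΔcard : Δ.ncard = Δf.card := Set.ncard_eq_toFinset_card Δ hΔfin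
  -- real arithmetic
  have hsum : (Δ.ncard : ℝ) ≤ ∑ i ∈ J, (({v ∈ Δ | v i = !(δ i)}).ncard : ℝ) := by
    rw [hΔcard]
    calc ((Δf.card : ℕ) : ℝ) ≤ ((∑ i ∈ J, (B i).card : ℕ) : ℝ) := by exact_mod_cast h1
    _ = ∑ i ∈ J, (((B i).card : ℕ) : ℝ) := by push_cast; ring
    _ = ∑ i ∈ J, (({v ∈ Δ | v i = !(δ i)}).ncard : ℝ) := by
        apply Finset.sum_congr rfl; intro i _; rw [hBcard i]
  have hlt : ∑ i ∈ J, (({v ∈ Δ | v i = !(δ i)}).ncard : ℝ)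
      < ∑ _i ∈ J, (Δ.ncard : ℝ) / (r : ℝ) :=
    Finset.sum_lt_sum_of_nonempty hJne (fun i hi => hJcond i hi)
  have hsumconst : ∑ _i ∈ J, (Δ.ncard : ℝ) / (r : ℝ)
      = (J.card : ℝ) * ((Δ.ncard : ℝ) / (r : ℝ)) := by
    rw [Finset.sum_const, nsmul_eq_mul]
  have hrpos : (0:ℝ) < (r : ℝ) := by exact_mod_cast hr
  have hle : (J.card : ℝ) * ((Δ.ncard : ℝ) / (r : ℝ))
      ≤ (r : ℝ) * ((Δ.ncard : ℝ) / (r : ℝ)) := by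
    apply mul_le_mul_of_nonneg_right
    · exact_mod_cast hJcard
    · positivity
  have heq : (r : ℝ) * ((Δ.ncard : ℝ) / (r : ℝ)) = (Δ.ncard : ℝ) := by
    field_simp
  linarith
end

section
/- Define U₃=(ℕ, F₃) with F₃={pᵢ : i∈ℕ} ∪ {lᵢ : i∈ℕ}, where pᵢ(j)=1 iff j=i and lᵢ(j)=1 iff j>i. Then for every n∈ℕ, the system Sₙ={p₁(x)=0,…,pₙ(x)=0, lₙ(x)=0} is inconsistent on ℕ (with ℕ={1,2,…}) but every proper subsystem of Sₙ is consistent. Hence U₃ is not r-i-reduced for any r. -/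
/-- `pᵢ(j) = 1` iff `j = i`. -/
def pAttr (i : ℕ+) : ℕ+ → Bool := fun j => decide (j = i)

/-- `lᵢ(j) = 1` iff `j > i`. -/
def lAttr (i : ℕ+) : ℕ+ → Bool := fun j => decide (i < j)

/-- The attribute set of `U₃`. -/
def F3 : Set (ℕ+ → Bool) := Set.range pAttr ∪ Set.range lAttr

/-!
The system `Sₙ` forces `x ≤ n` through `lₙ(x) = 0` and `x ∉ {1, …, n}` through the `pᵢ`, so
it has no solution; dropping `lₙ` leaves the solution `n + 1`, dropping `pₖ` the solution `k`.
An inconsistent system whose proper subsystems are all consistent is its own only inconsistent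
subsystem, so `S_{r+1}`, which has more than `r` equations, shows that `U₃` is not `r`-i-reduced.
-/

lemma Consistent.mono {A : Type} {S T : Set ((A → Bool) × Bool)} (hTS : T ⊆ S)
    (hS : Consistent S) : Consistent T :=
  let ⟨a, ha⟩ := hS
  ⟨a, fun e he => ha e (hTS he)⟩

lemma not_iReduced_of_minimal_inconsistent {A : Type} {F : Set (A → Bool)}
    {S : Set ((A → Bool) × Bool)} (hF : OverF F S) (hfin : S.Finite) (hS : ¬ Consistent S)
    (hmin : ∀ T, T ⊂ S → Consistent T) {r : ℕ} (hr : r < S.ncard) : ¬ IReduced F r := by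
  intro hred
  obtain ⟨T, hTS, hT, hcard⟩ := hred S hF hfin hS
  have hTeq : T = S := by_contra fun hne => hT (hmin T (hTS.ssubset_of_ne hne))
  exact (hTeq ▸ hcard).not_gt hr

/-- The system `Sₙ = {p₁(x) = 0, …, pₙ(x) = 0, lₙ(x) = 0}`. -/
def pSystem (n : ℕ+) : Set ((ℕ+ → Bool) × Bool) :=
  insert (lAttr n, false) (Set.range fun i : Fin (n : ℕ) => (pAttr (Nat.succPNat i.val), false))

lemma lAttr_eq_false {n a : ℕ+} : lAttr n a = false ↔ a ≤ n := by
  simp [lAttr]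

lemma pAttr_eq_false {k a : ℕ+} : pAttr k a = false ↔ a ≠ k := by
  simp [pAttr]

lemma exists_fin_succPNat_eq_iff {n k : ℕ+} :
    (∃ i : Fin (n : ℕ), Nat.succPNat i.val = k) ↔ k ≤ n := by
  constructor
  · rintro ⟨i, rfl⟩
    exact Nat.succ_le_of_lt i.isLt
  · intro hk
    refine ⟨⟨k.natPred, ?_⟩, PNat.succPNat_natPred k⟩
    have := PNat.natPred_add_one k
    have : (k : ℕ) ≤ n := hk
    omega

lemma mem_pSystem {n : ℕ+} {e : (ℕ+ → Bool) × Bool} :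
    e ∈ pSystem n ↔ e = (lAttr n, false) ∨ ∃ k ≤ n, e = (pAttr k, false) := by
  simp only [pSystem, Set.mem_insert_iff, Set.mem_range, ← exists_fin_succPNat_eq_iff]
  grind

lemma not_consistent_pSystem (n : ℕ+) : ¬ Consistent (pSystem n) := by
  rintro ⟨a, ha⟩
  have ha_le : a ≤ n := lAttr_eq_false.1 (ha _ (mem_pSystem.2 (Or.inl rfl)))
  exact pAttr_eq_false.1 (ha _ (mem_pSystem.2 (Or.inr ⟨a, ha_le, rfl⟩))) rfl

lemma consistent_pSystem_diff_singleton {n : ℕ+} {e : (ℕ+ → Bool) × Bool} (he : e ∈ pSystem n) :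
    Consistent (pSystem n \ {e}) := by
  rcases mem_pSystem.1 he with rfl | ⟨k, hk, rfl⟩
  · refine ⟨n + 1, fun f hf => ?_⟩
    rcases mem_pSystem.1 hf.1 with hfl | ⟨j, hj, rfl⟩
    · exact absurd hfl hf.2
    · exact pAttr_eq_false.2 (ne_of_gt (lt_of_le_of_lt hj (PNat.lt_add_right n 1)))
  · refine ⟨k, fun f hf => ?_⟩
    rcases mem_pSystem.1 hf.1 with rfl | ⟨j, -, rfl⟩
    · exact lAttr_eq_false.2 hk
    · exact pAttr_eq_false.2 fun hkj => hf.2 (hkj ▸ rfl)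

lemma consistent_of_ssubset_pSystem {n : ℕ+} {T : Set ((ℕ+ → Bool) × Bool)}
    (hT : T ⊂ pSystem n) : Consistent T := by
  obtain ⟨e, he, heT⟩ := Set.exists_of_ssubset hT
  have hT_sub : T ⊆ pSystem n \ {e} := fun f hf =>
    ⟨hT.1 hf, fun hfe => heT (Set.mem_singleton_iff.1 hfe ▸ hf)⟩
  exact (consistent_pSystem_diff_singleton he).mono hT_sub

lemma pSystem_overF (n : ℕ+) : OverF F3 (pSystem n) := by
  intro e he
  rcases mem_pSystem.1 he with rfl | ⟨k, -, rfl⟩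
  · exact Or.inr ⟨n, rfl⟩
  · exact Or.inl ⟨k, rfl⟩

lemma pSystem_finite (n : ℕ+) : (pSystem n).Finite :=
  (Set.finite_range _).insert _

lemma pAttr_injective : Function.Injective pAttr := fun i j h => by
  simpa [pAttr] using congrFun h i

lemma le_ncard_pSystem (n : ℕ+) : (n : ℕ) ≤ (pSystem n).ncard := by
  have hinj : Function.Injective fun i : Fin (n : ℕ) => (pAttr (Nat.succPNat i.val), false) :=
    fun i j h => Fin.ext (Nat.succPNat_inj.1 (pAttr_injective (congrArg Prod.fst h)))
  calc (n : ℕ) = (Set.range fun i : Fin (n : ℕ) => (pAttr (Nat.succPNat i.val), false)).ncard := by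
        rw [Set.ncard_range_of_injective hinj, Nat.card_eq_fintype_card, Fintype.card_fin]
    _ ≤ (pSystem n).ncard := Set.ncard_le_ncard (Set.subset_insert _ _) (pSystem_finite n)

/-- in `U₃`, for every `n` the system
`Sₙ = {p₁(x)=0, …, pₙ(x)=0, lₙ(x)=0}` is inconsistent while every proper subsystem of
it is consistent; hence `U₃` is not `r`-i-reduced for any `r`. -/
theorem stmt13 :
    (∀ n : ℕ+, ∀ S : Set ((ℕ+ → Bool) × Bool),
      S = insert (lAttr n, false)
          (Set.range fun i : Fin (n : ℕ) => (pAttr (Nat.succPNat i.val), false)) →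
      ¬ Consistent S ∧ ∀ T, T ⊂ S → Consistent T) ∧
    ∀ r : ℕ, ¬ IReduced F3 r := by
  refine ⟨fun n S hS => ?_, fun r => ?_⟩
  · subst hS
    exact ⟨not_consistent_pSystem n, fun T => consistent_of_ssubset_pSystem⟩
  · have hr : r < (pSystem r.succPNat).ncard := Nat.lt_of_succ_le (le_ncard_pSystem r.succPNat)
    exact not_iReduced_of_minimal_inconsistent (pSystem_overF _) (pSystem_finite _)
      (not_consistent_pSystem _) (fun T => consistent_of_ssubset_pSystem) hr
end

section
/- Define U₄=(ℕ², F₄) with F₄={fᵢ : i∈ℕ} ∪ {f_{i,j} : i,j∈ℕ}, where fᵢ(p,q)=1 iff p>i and f_{i,j}(a)=1 iff a=(i,j). Then a system of equations over U₄ is inconsistent if and only if it contains one of the following pairs: {f_{i,j}(x)=0, f_{i,j}(x)=1}; {f_{i,j}(x)=1, f_{k,l}(x)=1} with (i,j)≠(k,l); {f_{i,j}(x)=1, f_k(x)=0} with i>k; {f_{i,j}(x)=1, f_k(x)=1} with i≤k; {f_i(x)=0, f_j(x)=1} with i≤j. Consequently, U₄ is 2-i-reduced. -/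
/-- `fᵢ(p,q) = 1` iff `p > i`. -/
def f4 (i : ℕ+) : ℕ+ × ℕ+ → Bool := fun a => decide (i < a.1)

/-- `f_{i,j}(a) = 1` iff `a = (i,j)`. -/
def g4 (i j : ℕ+) : ℕ+ × ℕ+ → Bool := fun a => decide (a = (i, j))

/-- The attribute set of `U₄`. -/
def F4 : Set (ℕ+ × ℕ+ → Bool) := Set.range f4 ∪ {g | ∃ i j : ℕ+, g = g4 i j}

def F4Conflict (S : Set ((ℕ+ × ℕ+ → Bool) × Bool)) : Prop :=
  (∃ i j : ℕ+, (g4 i j, false) ∈ S ∧ (g4 i j, true) ∈ S) ∨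
  (∃ i j k l : ℕ+, (i, j) ≠ (k, l) ∧ (g4 i j, true) ∈ S ∧ (g4 k l, true) ∈ S) ∨
  (∃ i j k : ℕ+, k < i ∧ (g4 i j, true) ∈ S ∧ (f4 k, false) ∈ S) ∨
  (∃ i j k : ℕ+, i ≤ k ∧ (g4 i j, true) ∈ S ∧ (f4 k, true) ∈ S) ∨
  (∃ i j : ℕ+, i ≤ j ∧ (f4 i, false) ∈ S ∧ (f4 j, true) ∈ S)

section General

variable {A : Type} {S T : Set ((A → Bool) × Bool)}

theorem Consistent.mono_s19 (hTS : T ⊆ S) : Consistent S → Consistent T :=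
  fun ⟨a, ha⟩ => ⟨a, fun e he => ha e (hTS he)⟩

theorem not_consistent_pair_iff {e₁ e₂ : (A → Bool) × Bool} :
    ¬ Consistent {e₁, e₂} ↔ ∀ a, e₁.1 a = e₁.2 → e₂.1 a ≠ e₂.2 := by
  simp [Consistent]

theorem Set.Finite.exists_forall_lt_forall_le {α : Type*} [LinearOrder α] [OrderBot α]
    [SuccOrder α] [NoMaxOrder α] {K L : Set α} (hK : K.Finite)
    (hKL : ∀ k ∈ K, ∀ l ∈ L, k < l) : ∃ p, (∀ k ∈ K, k < p) ∧ ∀ l ∈ L, p ≤ l := by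
  rcases K.eq_empty_or_nonempty with rfl | hne
  · exact ⟨⊥, by simp, fun _ _ => bot_le⟩
  obtain ⟨m, hmK, hm⟩ := Set.exists_max_image K id hK hne
  exact ⟨Order.succ m, fun k hk => Order.lt_succ_of_le (hm k hk),
    fun l hl => Order.succ_le_of_lt (hKL m hmK l hl)⟩

end General

theorem f4_injective : Function.Injective f4 := by
  intro i j h
  have hi := congrFun h (i + 1, 1)
  have hj := congrFun h (j + 1, 1)
  simp only [f4, PNat.lt_add_one_iff, le_refl, decide_true, Bool.true_eq, decide_eq_true_eq]
    at hi hj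
  exact le_antisymm hj hi

theorem g4_injective (i : ℕ+) : Function.Injective (g4 i) := by
  intro j l h
  simpa [g4] using congrFun h (i, j)

section F4

variable {S : Set ((ℕ+ × ℕ+ → Bool) × Bool)}

theorem OverF.forall_F4 (hF : OverF F4 S) {P : (ℕ+ × ℕ+ → Bool) × Bool → Prop}
    (hf : ∀ k δ, (f4 k, δ) ∈ S → P (f4 k, δ))
    (hg : ∀ i j δ, (g4 i j, δ) ∈ S → P (g4 i j, δ)) : ∀ e ∈ S, P e := by
  rintro ⟨g, δ⟩ he
  rcases hF _ he with ⟨k, rfl⟩ | ⟨i, j, rfl⟩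
  exacts [hf k δ he, hg i j δ he]

theorem F4Conflict.exists_not_consistent_pair (h : F4Conflict S) :
    ∃ e₁ ∈ S, ∃ e₂ ∈ S, ¬ Consistent {e₁, e₂} := by
  rcases h with ⟨i, j, h₁, h₂⟩ | ⟨i, j, k, l, hne, h₁, h₂⟩ | ⟨i, j, k, hki, h₁, h₂⟩ |
      ⟨i, j, k, hik, h₁, h₂⟩ | ⟨i, j, hij, h₁, h₂⟩ <;>
    refine ⟨_, h₁, _, h₂, not_consistent_pair_iff.2 fun a ha hb => ?_⟩ <;>
    simp only [f4, g4, decide_eq_true_eq, decide_eq_false_iff_not] at ha hb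
  · simp [ha] at hb
  · exact hne (ha ▸ hb)
  · exact hb (ha ▸ hki)
  · exact absurd hik (ha ▸ hb).not_ge
  · exact ha (hij.trans_lt hb)

theorem consistent_of_compatible_point (hF : OverF F4 S) {i j : ℕ+}
    (hg_false : (g4 i j, false) ∉ S) (hg_true : ∀ k l, (g4 k l, true) ∈ S → (i, j) = (k, l))
    (hf_false : ∀ k, (f4 k, false) ∈ S → i ≤ k) (hf_true : ∀ k, (f4 k, true) ∈ S → k < i) :
    Consistent S := by
  refine ⟨(i, j), hF.forall_F4 (fun k δ he => ?_) (fun k l δ he => ?_)⟩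
  · cases δ
    · simpa [f4] using hf_false k he
    · simpa [f4] using hf_true k he
  · cases δ
    · simp only [g4, decide_eq_false_iff_not]
      rintro ⟨⟩
      exact hg_false he
    · simpa [g4] using hg_true k l he

theorem consistent_of_forall_g4_true_notMem (hF : OverF F4 S) (hS : S.Finite)
    (hg_true : ∀ i j, (g4 i j, true) ∉ S)
    (hf : ∀ k, (f4 k, true) ∈ S → ∀ l, (f4 l, false) ∈ S → k < l) : Consistent S := by
  have hK : {k | (f4 k, true) ∈ S}.Finite :=
    hS.preimage fun a _ b _ h => f4_injective (congrArg Prod.fst h)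
  obtain ⟨p, hp_true, hp_false⟩ :=
    hK.exists_forall_lt_forall_le (L := {l | (f4 l, false) ∈ S}) hf
  have hQ : {q | (g4 p q, false) ∈ S}.Finite :=
    hS.preimage fun a _ b _ h => g4_injective p (congrArg Prod.fst h)
  obtain ⟨q, hq⟩ := hQ.exists_notMem
  refine ⟨(p, q), hF.forall_F4 (fun k δ he => ?_) (fun i j δ he => ?_)⟩
  · cases δ
    · simpa [f4] using hp_false k he
    · simpa [f4] using hp_true k he
  · cases δ
    · simp only [g4, decide_eq_false_iff_not]
      rintro ⟨⟩
      exact hq he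
    · exact absurd he (hg_true i j)

theorem not_consistent_iff_f4Conflict (hF : OverF F4 S) (hS : S.Finite) :
    ¬ Consistent S ↔ F4Conflict S := by
  refine ⟨fun hS' => ?_, fun h hc => ?_⟩
  · by_contra hno
    simp only [F4Conflict, not_or, not_exists, not_and] at hno
    obtain ⟨h₁, h₂, h₃, h₄, h₅⟩ := hno
    apply hS'
    by_cases hg : ∃ i j, (g4 i j, true) ∈ S
    · obtain ⟨i, j, hij⟩ := hg
      exact consistent_of_compatible_point hF (fun h => h₁ i j h hij)
        (fun k l hkl => by_contra fun hne => h₂ i j k l hne hij hkl)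
        (fun k hk => not_lt.1 fun hki => h₃ i j k hki hij hk)
        (fun k hk => not_le.1 fun hik => h₄ i j k hik hij hk)
    · push Not at hg
      exact consistent_of_forall_g4_true_notMem hF hS hg
        fun k hk l hl => not_le.1 fun hlk => h₅ l k hlk hl hk
  · obtain ⟨e₁, h₁, e₂, h₂, hpair⟩ := h.exists_not_consistent_pair
    exact hpair (hc.mono_s19 (Set.pair_subset h₁ h₂))

theorem iReduced_F4_two : IReduced F4 2 := by
  intro S hF hS hinc
  obtain ⟨e₁, h₁, e₂, h₂, hpair⟩ :=
    ((not_consistent_iff_f4Conflict hF hS).1 hinc).exists_not_consistent_pair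
  exact ⟨{e₁, e₂}, Set.pair_subset h₁ h₂, hpair,
    (Set.ncard_insert_le _ _).trans (by simp)⟩

end F4

/-- an equation system over `U₄` is inconsistent iff it contains one of
the five listed pairs of equations; consequently `U₄` is 2-i-reduced. -/
theorem stmt19 :
    (∀ S : Set ((ℕ+ × ℕ+ → Bool) × Bool), OverF F4 S → S.Finite →
      (¬ Consistent S ↔
        (∃ i j : ℕ+, (g4 i j, false) ∈ S ∧ (g4 i j, true) ∈ S) ∨
        (∃ i j k l : ℕ+, (i, j) ≠ (k, l) ∧ (g4 i j, true) ∈ S ∧ (g4 k l, true) ∈ S) ∨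
        (∃ i j k : ℕ+, k < i ∧ (g4 i j, true) ∈ S ∧ (f4 k, false) ∈ S) ∨
        (∃ i j k : ℕ+, i ≤ k ∧ (g4 i j, true) ∈ S ∧ (f4 k, true) ∈ S) ∨
        (∃ i j : ℕ+, i ≤ j ∧ (f4 i, false) ∈ S ∧ (f4 j, true) ∈ S))) ∧
    IReduced F4 2 :=
  ⟨fun _ hF hS => not_consistent_iff_f4Conflict hF hS, iReduced_F4_two⟩
end
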